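/- arXiv:1408.0744 — 11 statements merged into one kernel-verified Lean document; each statement's English description precedes it below -/
import Mathlib

section
/- For the function f(x) = -x log x on [0,1] (with f(0)=0), for all x, y in [0,1] we have |f(x) - f(y)| ≤ |x-y|·(1 - log|x-y|) (interpreting the right side as 0 when x=y). -/
lemma stmt0_aux (x y : ℝ) (hy0 : 0 ≤ y) (hxy : y ≤ x) (hx1 : x ≤ 1) :
    |(-x * Real.log x) - (-y * Real.log y)| ≤ (x - y) * (1 - Real.log (x - y)) := by
  rcases eq_or_lt_of_le hxy with rfl | hlt
  · simp
  have hx0 : 0 < x := lt_of_le_of_lt hy0 hlt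
  have ht0 : 0 < x - y := by linarith
  have hlogx : Real.log x ≤ 0 := Real.log_nonpos hx0.le hx1
  have hlogtx : Real.log (x - y) ≤ Real.log x := Real.log_le_log ht0 (by linarith)
  have hlogt : Real.log (x - y) ≤ 0 := hlogtx.trans hlogx
  rw [abs_le]
  rcases eq_or_lt_of_le hy0 with rfl | hy0'
  · simp only [Real.log_zero, mul_zero, sub_zero, neg_mul]
    constructor
    · nlinarith
    · nlinarith
  constructor
  · -- x log x - y log y ≤ (x-y)(1 - log(x-y))
    have hdiv : 0 < x / y := div_pos hx0 hy0'
    have h1 : Real.log (x / y) ≤ x / y - 1 := Real.log_le_sub_one_of_pos hdiv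
    have h2 : Real.log (x / y) = Real.log x - Real.log y :=
      Real.log_div hx0.ne' hy0'.ne'
    have hA : y * (Real.log x - Real.log y) ≤ x - y := by
      rw [← h2]
      have := mul_le_mul_of_nonneg_left h1 hy0
      have hy' : y * (x / y - 1) = x - y := by field_simp
      linarith
    have hB : (x - y) * Real.log x ≤ 0 := mul_nonpos_of_nonneg_of_nonpos ht0.le hlogx
    have hC : 0 ≤ (x - y) * (-Real.log (x - y)) :=
      mul_nonneg ht0.le (by linarith)
    nlinarith
  · -- -x log x + y log y ≤ (x-y)(1 - log(x-y))
    have hlogyx : Real.log y ≤ Real.log x := Real.log_le_log hy0' hxy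
    have h1 : y * Real.log y - y * Real.log x ≤ 0 := by nlinarith
    have h2 : (x - y) * Real.log (x - y) ≤ (x - y) * Real.log x :=
      mul_le_mul_of_nonneg_left hlogtx ht0.le
    nlinarith

/-- For `f(x) = -x log x` on `[0,1]` (with `f(0)=0`, noting `Real.log 0 = 0`),
`|f x - f y| ≤ |x-y| * (1 - log |x-y|)`. -/
theorem stmt0 (x y : ℝ) (hx : x ∈ Set.Icc (0:ℝ) 1) (hy : y ∈ Set.Icc (0:ℝ) 1) :
    |(-x * Real.log x) - (-y * Real.log y)| ≤ |x - y| * (1 - Real.log |x - y|) := by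
  rcases le_total y x with h | h
  · rw [abs_of_nonneg (by linarith : (0:ℝ) ≤ x - y)]
    exact stmt0_aux x y hy.1 h hx.2
  · rw [abs_sub_comm, abs_sub_comm x y,
      abs_of_nonneg (by linarith : (0:ℝ) ≤ y - x)]
    exact stmt0_aux y x hx.1 h hy.2
end

section
/- For the concave function f(x) = -x log x on [0,1], for all x,y in [0,1], |f(x) - f(y)| ≤ f(|x-y|) + f(1-|x-y|). -/
/-!
`f x = -x log x` is concave with `f 0 = f 1 = 0`, hence `f ≥ 0` on `[0, 1]`. For `y ≤ x` and
`t = x - y`, the pair `(y, t)` is majorized by `(0, x)` and `(x, 1 - t)` by `(y, 1)`,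
so concavity gives `f x - f y ≤ f t` and `f y - f x ≤ f (1 - t)`.
-/

open Real Set

/-- The two-point case of Karamata's majorization inequality. -/
theorem ConcaveOn.add_le_add_of_add_eq {𝕜 : Type*} [Field 𝕜] [LinearOrder 𝕜]
    [IsStrictOrderedRing 𝕜] {s : Set 𝕜} {f : 𝕜 → 𝕜} (hf : ConcaveOn 𝕜 s f) {a b x y : 𝕜} (ha : a ∈ s) (hb : b ∈ s)
    (hax : a ≤ x) (hxb : x ≤ b) (hay : a ≤ y) (hyb : y ≤ b) (hsum : x + y = a + b) :
    f a + f b ≤ f x + f y := by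
  rcases hax.trans hxb |>.eq_or_lt with rfl | hab
  · obtain rfl : x = a := le_antisymm hxb hax
    obtain rfl : y = x := le_antisymm hyb hay
    rfl
  set θ := (b - x) / (b - a)
  have hba : 0 < b - a := sub_pos.2 hab
  have hθ0 : 0 ≤ θ := div_nonneg (sub_nonneg.2 hxb) hba.le
  have hθ1 : 0 ≤ 1 - θ := by
    rw [sub_nonneg, div_le_one hba]
    linarith
  have hx : θ • a + (1 - θ) • b = x := by
    simp only [smul_eq_mul, θ]
    field_simp
    ring
  have hy : (1 - θ) • a + θ • b = y := by
    rw [eq_sub_of_add_eq' hsum]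
    simp only [smul_eq_mul, θ]
    field_simp
    ring
  have hfx := hf.2 ha hb hθ0 hθ1 (add_sub_cancel θ 1)
  have hfy := hf.2 ha hb hθ1 hθ0 (sub_add_cancel 1 θ)
  rw [hx] at hfx
  rw [hy] at hfy
  simp only [smul_eq_mul] at hfx hfy
  linarith

theorem ConcaveOn.abs_sub_le_of_eq_zero_of_eq_zero {f : ℝ → ℝ} (hf : ConcaveOn ℝ (Icc 0 1) f)
    (h0 : f 0 = 0) (h1 : f 1 = 0) {x y : ℝ} (hx : x ∈ Icc (0 : ℝ) 1) (hy : y ∈ Icc (0 : ℝ) 1) :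
    |f x - f y| ≤ f |x - y| + f (1 - |x - y|) := by
  wlog hyx : y ≤ x generalizing x y
  · rw [abs_sub_comm, abs_sub_comm x]
    exact this hy hx (le_of_not_ge hyx)
  have h01 : (0 : ℝ) ≤ 1 := zero_le_one
  obtain ⟨hx0, hx1⟩ := hx
  obtain ⟨hy0, hy1⟩ := hy
  have hnonneg : ∀ z ∈ Icc (0 : ℝ) 1, 0 ≤ f z := fun z hz => by
    simpa [h0, h1] using hf.ge_on_segment (left_mem_Icc.2 h01)
      (right_mem_Icc.2 h01) (segment_eq_Icc h01 ▸ hz)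
  rw [abs_of_nonneg (sub_nonneg.2 hyx)]
  have hsub : f x ≤ f y + f (x - y) := by
    simpa [h0] using hf.add_le_add_of_add_eq (left_mem_Icc.2 h01) ⟨hx0, hx1⟩ hy0 hyx
      (by linarith) (by linarith) (by ring)
  have hmaj : f y ≤ f x + f (1 - (x - y)) := by
    simpa [h1] using hf.add_le_add_of_add_eq ⟨hy0, hy1⟩ (right_mem_Icc.2 h01) hyx hx1
      (by linarith) (by linarith) (by ring)
  have hft := hnonneg (x - y) ⟨by linarith, by linarith⟩
  have hf1t := hnonneg (1 - (x - y)) ⟨by linarith, by linarith⟩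
  rw [abs_le]
  constructor <;> linarith

/-- For the concave function `f(x) = -x log x` on `[0,1]`,
`|f x - f y| ≤ f |x-y| + f (1-|x-y|)`. -/
theorem stmt1 (x y : ℝ) (hx : x ∈ Set.Icc (0:ℝ) 1) (hy : y ∈ Set.Icc (0:ℝ) 1) :
    |(-x * Real.log x) - (-y * Real.log y)| ≤
      (-|x - y| * Real.log |x - y|) + (-(1 - |x - y|) * Real.log (1 - |x - y|)) :=
  (concaveOn_negMulLog.subset Icc_subset_Ici_self (convex_Icc 0 1))
    |>.abs_sub_le_of_eq_zero_of_eq_zero negMulLog_zero negMulLog_one hx hy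
end

section
/- If ρ and ρ' are fractional q-partitions of [0,1] (measurable functions ρ_i : [0,1] → [0,1] with ∑_{i=1}^q ρ_i(x) = 1 for all x), then |Ent(ρ) - Ent(ρ')| ≤ q · f̃(d₁(ρ,ρ')/q), where Ent(ρ) = ∫₀¹ ∑_i (-ρ_i(x) log ρ_i(x)) dx, d₁(ρ,ρ') = ∑_i ∫₀¹ |ρ_i(x) - ρ'_i(x)| dx, and f̃(t) = t(1 - log t) with f̃(0)=0. -/
/-!
With `η = negMulLog`, one has `|η a - η b| ≤ f̃ |a - b|` for `a, b ∈ [0, 1]`: subadditivity of `η`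
gives one direction, and monotonicity of `f̃ = id + η` on `[0, 1]` the other. Integrating and
summing over `i` bounds `|Ent ρ - Ent ρ'|` by `∑ᵢ ∫ f̃ |ρᵢ - ρ'ᵢ|`, and Jensen's
inequality for the concave `f̃`, applied first to each integral and then to the average over the
`q` indices, bounds this by `q f̃ (d₁(ρ, ρ') / q)`.
-/

open MeasureTheory

/-- A fractional `q`-partition of `[0,1]`: measurable functions with values in `[0,1]`
summing pointwise to `1`. -/
def IsFracPartition (q : ℕ) (ρ : Fin q → ℝ → ℝ) : Prop :=
  (∀ i, Measurable (ρ i)) ∧ (∀ i x, ρ i x ∈ Set.Icc (0:ℝ) 1) ∧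
    (∀ x, ∑ i, ρ i x = 1)

/-- Entropy of a fractional partition: `∫₀¹ ∑ᵢ -ρᵢ(x) log ρᵢ(x) dx`. -/
noncomputable def Ent (q : ℕ) (ρ : Fin q → ℝ → ℝ) : ℝ :=
  ∫ x in Set.Icc (0:ℝ) 1, ∑ i, -(ρ i x) * Real.log (ρ i x)

/-- `L¹` distance between fractional partitions. -/
noncomputable def d1FP (q : ℕ) (ρ ρ' : Fin q → ℝ → ℝ) : ℝ :=
  ∑ i, ∫ x in Set.Icc (0:ℝ) 1, |ρ i x - ρ' i x|

open Real Set Finset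

/-- The function `f̃` of the paper; `Real.log 0 = 0` makes `entropyModulus 0 = 0`. -/
noncomputable def entropyModulus (t : ℝ) : ℝ := t * (1 - log t)

lemma entropyModulus_eq_add_negMulLog (t : ℝ) : entropyModulus t = t + negMulLog t := by
  rw [entropyModulus, negMulLog]; ring

lemma continuous_entropyModulus : Continuous entropyModulus :=
  (continuous_id.add continuous_negMulLog).congr fun t => (entropyModulus_eq_add_negMulLog t).symm

lemma concaveOn_entropyModulus : ConcaveOn ℝ (Ici 0) entropyModulus := by
  have : entropyModulus = id + negMulLog := funext entropyModulus_eq_add_negMulLog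
  exact this ▸ (concaveOn_id (convex_Ici 0)).add concaveOn_negMulLog

lemma negMulLog_mem_Icc {x : ℝ} (hx : x ∈ Icc (0 : ℝ) 1) : negMulLog x ∈ Icc (0 : ℝ) 1 :=
  ⟨negMulLog_nonneg hx.1 hx.2, by linarith [negMulLog_le_one_sub_self hx.1, hx.1]⟩

lemma entropyModulus_mem_Icc {t : ℝ} (ht : t ∈ Icc (0 : ℝ) 1) :
    entropyModulus t ∈ Icc (0 : ℝ) 1 := by
  rw [entropyModulus_eq_add_negMulLog]
  exact ⟨add_nonneg ht.1 (negMulLog_nonneg ht.1 ht.2), by linarith [negMulLog_le_one_sub_self ht.1]⟩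

lemma negMulLog_add_le {x y : ℝ} (hx : 0 ≤ x) (hy : 0 ≤ y) :
    negMulLog (x + y) ≤ negMulLog x + negMulLog y := by
  have mul_log_le {a b : ℝ} (ha : 0 ≤ a) (hb : 0 ≤ b) : a * log a ≤ a * log (a + b) := by
    rcases ha.eq_or_lt with rfl | ha
    · simp
    · exact mul_le_mul_of_nonneg_left (log_le_log ha (by linarith)) ha.le
  have hxy := mul_log_le hx hy
  have hyx := mul_log_le hy hx
  rw [add_comm y] at hyx
  simp only [negMulLog]
  linarith

lemma negMulLog_sub_negMulLog_le {x y : ℝ} (hy : 0 ≤ y) (hyx : y ≤ x) (hx : x ≤ 1) :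
    negMulLog y - negMulLog x ≤ x - y := by
  rcases (hy.trans hyx).eq_or_lt with rfl | hx0
  · obtain rfl : y = 0 := le_antisymm hyx hy
    simp
  set s := y / x
  have hys : y = x * s := (mul_div_cancel₀ y hx0.ne').symm
  have hs0 : 0 ≤ s := div_nonneg hy hx0.le
  have hs1 : s ≤ 1 := div_le_one_of_le₀ hyx hx0.le
  have h1 : x * negMulLog s ≤ x * (1 - s) :=
    mul_le_mul_of_nonneg_left (negMulLog_le_one_sub_self hs0) hx0.le
  have h2 : 0 ≤ (1 - s) * negMulLog x := mul_nonneg (by linarith) (negMulLog_nonneg hx0.le hx)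
  rw [hys, negMulLog_mul]
  linarith

lemma abs_negMulLog_sub_le {x y : ℝ} (hx : x ∈ Icc (0 : ℝ) 1) (hy : y ∈ Icc (0 : ℝ) 1) :
    |negMulLog x - negMulLog y| ≤ entropyModulus |x - y| := by
  wlog hyx : y ≤ x generalizing x y
  · rw [abs_sub_comm, abs_sub_comm x]
    exact this hy hx (le_of_not_ge hyx)
  have ht : x - y ∈ Icc (0 : ℝ) 1 := ⟨by linarith, by linarith [hx.2, hy.1]⟩
  have hsub := negMulLog_add_le hy.1 ht.1
  rw [add_sub_cancel] at hsub
  have hmono := negMulLog_sub_negMulLog_le hy.1 hyx hx.2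
  rw [abs_of_nonneg ht.1, entropyModulus_eq_add_negMulLog, abs_sub_le_iff]
  constructor <;> linarith [negMulLog_nonneg ht.1 ht.2]

lemma sum_entropyModulus_le {ι : Type*} (s : Finset ι) {a : ι → ℝ} (ha : ∀ i ∈ s, 0 ≤ a i) :
    ∑ i ∈ s, entropyModulus (a i) ≤ #s * entropyModulus ((∑ i ∈ s, a i) / #s) := by
  rcases s.eq_empty_or_nonempty with rfl | hs
  · simp
  have hcard : (0 : ℝ) < #s := by exact_mod_cast hs.card_pos
  have := concaveOn_entropyModulus.le_map_sum (t := s) (w := fun _ => (#s : ℝ)⁻¹) (p := a)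
    (fun _ _ => by positivity) (by simp [hcard.ne']) ha
  simp only [smul_eq_mul, ← Finset.mul_sum] at this
  rwa [div_eq_inv_mul, ← inv_mul_le_iff₀ hcard]

lemma abs_sum_negMulLog_sub_le {ι : Type*} (s : Finset ι) {x y : ι → ℝ}
    (hx : ∀ i, x i ∈ Icc (0 : ℝ) 1) (hy : ∀ i, y i ∈ Icc (0 : ℝ) 1) :
    |∑ i ∈ s, negMulLog (x i) - ∑ i ∈ s, negMulLog (y i)| ≤
      ∑ i ∈ s, entropyModulus |x i - y i| := by
  rw [← Finset.sum_sub_distrib]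
  exact (abs_sum_le_sum_abs _ _).trans
    (Finset.sum_le_sum fun i _ => abs_negMulLog_sub_le (hx i) (hy i))

theorem abs_integral_sum_negMulLog_sub_le {α ι : Type*} [MeasurableSpace α] [Fintype ι]
    (μ : Measure α) [IsProbabilityMeasure μ] {ρ ρ' : ι → α → ℝ}
    (hρ : ∀ i, Measurable (ρ i)) (hρ' : ∀ i, Measurable (ρ' i))
    (hρ01 : ∀ i x, ρ i x ∈ Icc (0 : ℝ) 1) (hρ'01 : ∀ i x, ρ' i x ∈ Icc (0 : ℝ) 1) :
    |∫ x, ∑ i, negMulLog (ρ i x) ∂μ - ∫ x, ∑ i, negMulLog (ρ' i x) ∂μ| ≤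
      Fintype.card ι *
        entropyModulus ((∑ i, ∫ x, |ρ i x - ρ' i x| ∂μ) / Fintype.card ι) := by
  have integrable_of_mem_Icc {f : α → ℝ} (hf : Measurable f) (h01 : ∀ x, f x ∈ Icc (0 : ℝ) 1) :
      Integrable f μ :=
    .of_bound hf.aestronglyMeasurable 1 <| ae_of_all _ fun x => by
      rw [Real.norm_of_nonneg (h01 x).1]; exact (h01 x).2
  have integrable_entropy {p : ι → α → ℝ} (hp : ∀ i, Measurable (p i))
      (hp01 : ∀ i x, p i x ∈ Icc (0 : ℝ) 1) : Integrable (fun x => ∑ i, negMulLog (p i x)) μ :=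
    integrable_finsetSum _ fun i _ =>
      integrable_of_mem_Icc (continuous_negMulLog.measurable.comp (hp i))
        fun x => negMulLog_mem_Icc (hp01 i x)
  have hδ i x : |ρ i x - ρ' i x| ∈ Icc (0 : ℝ) 1 :=
    ⟨abs_nonneg _, abs_sub_le_iff.2 ⟨by linarith [(hρ01 i x).2, (hρ'01 i x).1],
      by linarith [(hρ01 i x).1, (hρ'01 i x).2]⟩⟩
  have hδm i : Measurable fun x => |ρ i x - ρ' i x| := ((hρ i).sub (hρ' i)).abs
  have hδi i : Integrable (fun x => |ρ i x - ρ' i x|) μ := integrable_of_mem_Icc (hδm i) (hδ i)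
  have hfδi i : Integrable (fun x => entropyModulus |ρ i x - ρ' i x|) μ :=
    integrable_of_mem_Icc (continuous_entropyModulus.measurable.comp (hδm i))
      fun x => entropyModulus_mem_Icc (hδ i x)
  calc |∫ x, ∑ i, negMulLog (ρ i x) ∂μ - ∫ x, ∑ i, negMulLog (ρ' i x) ∂μ|
      = |∫ x, (∑ i, negMulLog (ρ i x) - ∑ i, negMulLog (ρ' i x)) ∂μ| := by
        rw [integral_sub (integrable_entropy hρ hρ01) (integrable_entropy hρ' hρ'01)]
    _ ≤ ∫ x, |∑ i, negMulLog (ρ i x) - ∑ i, negMulLog (ρ' i x)| ∂μ :=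
        abs_integral_le_integral_abs
    _ ≤ ∫ x, ∑ i, entropyModulus |ρ i x - ρ' i x| ∂μ :=
        integral_mono
          ((integrable_entropy hρ hρ01).sub (integrable_entropy hρ' hρ'01)).abs
          (integrable_finsetSum _ fun i _ => hfδi i)
          fun x => abs_sum_negMulLog_sub_le _ (hρ01 · x) (hρ'01 · x)
    _ = ∑ i, ∫ x, entropyModulus |ρ i x - ρ' i x| ∂μ :=
        integral_finsetSum _ fun i _ => hfδi i
    _ ≤ ∑ i, entropyModulus (∫ x, |ρ i x - ρ' i x| ∂μ) :=
        Finset.sum_le_sum fun i _ =>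
          concaveOn_entropyModulus.le_map_integral continuous_entropyModulus.continuousOn
            isClosed_Ici (ae_of_all _ fun x => (hδ i x).1) (hδi i) (hfδi i)
    _ ≤ _ := by
        simpa only [Finset.card_univ] using
          sum_entropyModulus_le Finset.univ fun i _ => integral_nonneg fun x => (hδ i x).1

/-- `|Ent ρ - Ent ρ'| ≤ q · f̃(d₁(ρ,ρ')/q)` where `f̃(t) = t(1 - log t)`. -/
theorem stmt2 (q : ℕ) (ρ ρ' : Fin q → ℝ → ℝ)
    (hρ : IsFracPartition q ρ) (hρ' : IsFracPartition q ρ') :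
    |Ent q ρ - Ent q ρ'| ≤
      q * ((d1FP q ρ ρ' / q) * (1 - Real.log (d1FP q ρ ρ' / q))) := by
  obtain ⟨hm, h01, -⟩ := hρ
  obtain ⟨hm', h01', -⟩ := hρ'
  have : IsProbabilityMeasure (volume.restrict (Icc (0 : ℝ) 1)) := ⟨by simp⟩
  have key := abs_integral_sum_negMulLog_sub_le (volume.restrict (Icc (0 : ℝ) 1)) hm hm' h01 h01'
  rw [Fintype.card_fin] at key
  -- `Ent`, `d1FP` and `entropyModulus` unfold to the two sides of `key`.
  exact key
end

section
/- Let W be an integrable function on [0,1]², and for each n let P_n be the partition of [0,1] into n consecutive intervals of length 1/n. Then W_{P_n} → W almost everywhere as n → ∞, where W_{P_n} is the block-average of W over the grid P_n × P_n. -/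
/-!
Extend `W` by zero outside the unit square; the extension is integrable, so the Lebesgue
differentiation theorem for the doubling measure `volume` on `ℝ × ℝ` applies. That theorem
allows closed balls which shrink and merely contain the point, and in the sup metric of `ℝ × ℝ`
these balls are squares. For `z ∈ [0,1)²` the grid square of `P_n × P_n` containing `z` is,
up to a null boundary, the ball of radius `1/(2n)` around its centre, and it lies inside the
unit square, where the extension agrees with `W`.
-/

open MeasureTheory Filter

/-- Average of `W` over the grid block of side `1/n` containing `z`. -/
noncomputable def gridAvg (n : ℕ) (W : ℝ × ℝ → ℝ) (z : ℝ × ℝ) : ℝ :=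
  (n : ℝ)^2 *
    ∫ p in (Set.Ico ((⌊(n : ℝ) * z.1⌋ : ℝ) / n) ((⌊(n : ℝ) * z.1⌋ + 1 : ℝ) / n)) ×ˢ
             (Set.Ico ((⌊(n : ℝ) * z.2⌋ : ℝ) / n) ((⌊(n : ℝ) * z.2⌋ + 1 : ℝ) / n)), W p

open Metric Set

open scoped Topology

noncomputable def gridCell (n : ℕ) (t : ℝ) : Set ℝ :=
  Ico (⌊(n : ℝ) * t⌋ / n) (⌊(n : ℝ) * t⌋ / n + 1 / n)

lemma Real.closedBall_prod_eq_Icc_prod (a b h : ℝ) :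
    closedBall (a + h / 2, b + h / 2) (h / 2) = Icc a (a + h) ×ˢ Icc b (b + h) := by
  rw [← closedBall_prod_same, Real.closedBall_eq_Icc, Real.closedBall_eq_Icc]
  congr 2 <;> ring

lemma Real.Ico_prod_Ico_ae_eq_Icc_prod_Icc (a b c d : ℝ) :
    (Ico a b ×ˢ Ico c d : Set (ℝ × ℝ)) =ᵐ[volume] Icc a b ×ˢ Icc c d := by
  rw [Measure.volume_eq_prod]
  exact Measure.set_prod_ae_eq Ico_ae_eq_Icc Ico_ae_eq_Icc

theorem ae_tendsto_setAverage_Ico_prod_Ico {E : Type*} [NormedAddCommGroup E] [NormedSpace ℝ E]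
    [CompleteSpace E] {ι : Type*} (l : Filter ι) {f : ℝ × ℝ → E}
    (hf : LocallyIntegrable f volume) :
    ∀ᵐ z, ∀ a b h : ι → ℝ, Tendsto h l (𝓝[>] 0) →
      (∀ᶠ i in l, z ∈ Ico (a i) (a i + h i) ×ˢ Ico (b i) (b i + h i)) →
      Tendsto (fun i ↦ ⨍ y in Ico (a i) (a i + h i) ×ˢ Ico (b i) (b i + h i), f y) l
        (𝓝 (f z)) := by
  filter_upwards [IsUnifLocDoublingMeasure.ae_tendsto_average volume hf 1] with z hz a b h hlim hmem
  have hlim_half : Tendsto (fun i ↦ h i / 2) l (𝓝[>] 0) := by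
    rw [tendsto_nhdsWithin_iff] at hlim ⊢
    refine ⟨by simpa using hlim.1.div_const 2, ?_⟩
    filter_upwards [hlim.2] with i hi using half_pos (mem_Ioi.1 hi)
  have hmem_ball : ∀ᶠ i in l, z ∈ closedBall (a i + h i / 2, b i + h i / 2) (1 * (h i / 2)) := by
    filter_upwards [hmem] with i hi
    rw [one_mul, Real.closedBall_prod_eq_Icc_prod]
    exact prod_mono Ico_subset_Icc_self Ico_subset_Icc_self hi
  simpa only [Real.closedBall_prod_eq_Icc_prod,
    ← setAverage_congr (Real.Ico_prod_Ico_ae_eq_Icc_prod_Icc _ _ _ _)]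
    using hz _ _ hlim_half hmem_ball

lemma mem_gridCell {n : ℕ} (hn : 0 < n) (t : ℝ) : t ∈ gridCell n t := by
  have hn' : (0 : ℝ) < n := Nat.cast_pos.2 hn
  rw [gridCell, ← add_div, mem_Ico, div_le_iff₀ hn', lt_div_iff₀ hn', mul_comm t]
  exact ⟨Int.floor_le _, Int.lt_floor_add_one _⟩

lemma gridCell_subset_Icc {n : ℕ} {t : ℝ} (ht : t ∈ Ico (0 : ℝ) 1) :
    gridCell n t ⊆ Icc 0 1 := by
  have hfloor_nonneg : (0 : ℝ) ≤ ⌊(n : ℝ) * t⌋ :=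
    Int.cast_nonneg_iff.2 (Int.floor_nonneg.2 (mul_nonneg n.cast_nonneg ht.1))
  rcases n.eq_zero_or_pos with rfl | hn
  · simp [gridCell]
  have hn' : (0 : ℝ) < n := Nat.cast_pos.2 hn
  have hfloor_lt : ⌊(n : ℝ) * t⌋ < (n : ℤ) := by
    rw [Int.floor_lt, Int.cast_natCast]
    nlinarith [ht.2]
  have hfloor_succ_le : (⌊(n : ℝ) * t⌋ : ℝ) + 1 ≤ n := by exact_mod_cast hfloor_lt
  refine Ico_subset_Icc_self.trans (Icc_subset_Icc (div_nonneg hfloor_nonneg hn'.le) ?_)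
  rwa [← add_div, div_le_one hn']

lemma measureReal_gridCell_prod (n : ℕ) (s t : ℝ) :
    volume.real (gridCell n s ×ˢ gridCell n t) = 1 / n * (1 / n) := by
  rw [Measure.volume_eq_prod, measureReal_prod_prod, gridCell, gridCell, measureReal_def,
    measureReal_def, Real.volume_Ico, Real.volume_Ico, add_sub_cancel_left,
    add_sub_cancel_left, ENNReal.toReal_ofReal (by positivity)]

lemma gridAvg_eq_setAverage_indicator {n : ℕ} (W : ℝ × ℝ → ℝ) {z : ℝ × ℝ}
    (hz : z ∈ Ico (0 : ℝ) 1 ×ˢ Ico (0 : ℝ) 1) :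
    gridAvg n W z =
      ⨍ y in gridCell n z.1 ×ˢ gridCell n z.2, (Icc (0 : ℝ) 1 ×ˢ Icc (0 : ℝ) 1).indicator W y := by
  have hsub : gridCell n z.1 ×ˢ gridCell n z.2 ⊆ Icc (0 : ℝ) 1 ×ˢ Icc (0 : ℝ) 1 :=
    prod_mono (gridCell_subset_Icc hz.1) (gridCell_subset_Icc hz.2)
  rw [setAverage_eq, measureReal_gridCell_prod,
    setIntegral_indicator (measurableSet_Icc.prod measurableSet_Icc), inter_eq_left.2 hsub,
    gridAvg, gridCell, gridCell, smul_eq_mul]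
  simp only [add_div]
  congr 1
  field_simp

/-- Almost-everywhere convergence of grid block averages to `W`. -/
theorem stmt7 (W : ℝ × ℝ → ℝ)
    (hW : IntegrableOn W (Set.Icc (0:ℝ) 1 ×ˢ Set.Icc (0:ℝ) 1)) :
    ∀ᵐ z ∂(volume.restrict (Set.Icc (0:ℝ) 1 ×ˢ Set.Icc (0:ℝ) 1)),
      Tendsto (fun n : ℕ => gridAvg n W z) atTop (nhds (W z)) := by
  have hext : LocallyIntegrable ((Icc (0 : ℝ) 1 ×ˢ Icc (0 : ℝ) 1).indicator W) volume :=
    ((integrable_indicator_iff (measurableSet_Icc.prod measurableSet_Icc)).2 hW).locallyIntegrable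
  rw [Measure.restrict_congr_set (Real.Ico_prod_Ico_ae_eq_Icc_prod_Icc 0 1 0 1).symm]
  filter_upwards [ae_restrict_of_ae (ae_tendsto_setAverage_Ico_prod_Ico (atTop : Filter ℕ) hext),
    ae_restrict_mem (measurableSet_Ico.prod measurableSet_Ico)] with z hz hzQ
  have hlim := hz (fun n : ℕ ↦ ⌊(n : ℝ) * z.1⌋ / n) (fun n : ℕ ↦ ⌊(n : ℝ) * z.2⌋ / n)
    (fun n : ℕ ↦ 1 / (n : ℝ)) (by simpa only [Function.comp_def, one_div] using
      tendsto_inv_atTop_nhdsGT_zero.comp tendsto_natCast_atTop_atTop)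
    ((eventually_gt_atTop 0).mono fun n hn ↦ ⟨mem_gridCell hn z.1, mem_gridCell hn z.2⟩)
  rw [indicator_of_mem (prod_mono Ico_subset_Icc_self Ico_subset_Icc_self hzQ)] at hlim
  exact hlim.congr fun n ↦ (gridAvg_eq_setAverage_indicator W hzQ).symm
end

section
/- Let U and W be graphons (symmetric integrable functions on [0,1]²), q ∈ ℕ, and ρ a fractional q-partition of [0,1]. Then d₁(U/ρ, W/ρ) ≤ q² ‖U - W‖_□, where U/ρ = (α(ρ), β(U/ρ)) with α_i(ρ) = ∫ρ_i and β_{ij}(U/ρ) = ∫ ρ_i(x)ρ_j(y)U(x,y) dx dy, and d₁ is the ℓ¹ distance on the pairs (α,β). -/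
open MeasureTheory

/-- Cut norm of `W : [0,1]² → ℝ`. -/
noncomputable def cutNorm (W : ℝ × ℝ → ℝ) : ℝ :=
  sSup {r : ℝ | ∃ S T : Set ℝ, MeasurableSet S ∧ MeasurableSet T ∧
    S ⊆ Set.Icc 0 1 ∧ T ⊆ Set.Icc 0 1 ∧ r = |∫ z in S ×ˢ T, W z|}

/-- `α_i(ρ) = ∫₀¹ ρ_i`. -/
noncomputable def qalpha (q : ℕ) (ρ : Fin q → ℝ → ℝ) : Fin q → ℝ :=
  fun i => ∫ x in Set.Icc (0:ℝ) 1, ρ i x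

/-- `β_{ij}(W/ρ) = ∫ ρ_i(x) ρ_j(y) W(x,y) dx dy`. -/
noncomputable def qbeta (q : ℕ) (W : ℝ × ℝ → ℝ) (ρ : Fin q → ℝ → ℝ) :
    Fin q → Fin q → ℝ :=
  fun i j => ∫ z in Set.Icc (0:ℝ) 1 ×ˢ Set.Icc (0:ℝ) 1, ρ i z.1 * ρ j z.2 * W z

/-- `ℓ¹` distance on quotients `(α, β)`. -/
def d1Q {q : ℕ} (p p' : (Fin q → ℝ) × (Fin q → Fin q → ℝ)) : ℝ :=
  (∑ i, |p.1 i - p'.1 i|) + ∑ i, ∑ j, |p.2 i j - p'.2 i j|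

/-
The map `W ↦ β(W/ρ)` is linear, so `β_{ij}(U/ρ) - β_{ij}(W/ρ)` is the integral of
`ρ_i(x) ρ_j(y) (U - W)(x, y)`, while `α(ρ)` does not depend on the graphon at all. For a weight
`0 ≤ f ≤ 1`, the integral `∫ f h` lies between `∫_{h < 0} h` and `∫_{h ≥ 0} h`, so it is
dominated in absolute value by `|∫_S h|` for some set `S`. Applying this in each variable
separately (Fubini) replaces the weights `ρ_i, ρ_j` by indicators of sets `S, T`, and
`|∫_{S × T} (U - W)| ≤ ‖U - W‖_□`. Summing over the `q²` pairs `(i, j)` gives the bound.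
-/

open MeasureTheory Set

section UnitWeight

variable {α : Type*} [MeasurableSpace α] {μ : Measure α} {s : Set α} {f h : α → ℝ}

theorem MeasureTheory.IntegrableOn.mul_of_mem_Icc (hh : IntegrableOn h s μ)
    (hf_meas : Measurable f) (hf : ∀ x, f x ∈ Icc 0 1) : IntegrableOn (fun x => f x * h x) s μ :=
  hh.bdd_mul hf_meas.aestronglyMeasurable (c := 1) <| ae_of_all _ fun x => by
    rw [Real.norm_eq_abs, abs_of_nonneg (hf x).1]
    exact (hf x).2

theorem exists_abs_setIntegral_mul_le_of_measurable (hs : MeasurableSet s)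
    (hf_meas : Measurable f) (hf : ∀ x, f x ∈ Icc 0 1) (h_meas : Measurable h)
    (hh : IntegrableOn h s μ) :
    ∃ t ⊆ s, MeasurableSet t ∧ |∫ x in s, f x * h x ∂μ| ≤ |∫ x in t, h x ∂μ| := by
  set P : Set α := {x | 0 ≤ h x}
  have hP : MeasurableSet P := measurableSet_le measurable_const h_meas
  have hfh := hh.mul_of_mem_Icc hf_meas hf
  have h_split := integral_inter_add_sdiff hP hfh
  have h_upper : ∫ x in s, f x * h x ∂μ ≤ ∫ x in s ∩ P, h x ∂μ := by
    have h_pos : ∫ x in s ∩ P, f x * h x ∂μ ≤ ∫ x in s ∩ P, h x ∂μ :=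
      setIntegral_mono_on (hfh.mono_set inter_subset_left) (hh.mono_set inter_subset_left)
        (hs.inter hP) fun x hx => mul_le_of_le_one_left hx.2 (hf x).2
    have h_neg : ∫ x in s \ P, f x * h x ∂μ ≤ 0 :=
      setIntegral_nonpos (hs.diff hP) fun x hx =>
        mul_nonpos_of_nonneg_of_nonpos (hf x).1 (le_of_not_ge hx.2)
    linarith
  have h_lower : ∫ x in s \ P, h x ∂μ ≤ ∫ x in s, f x * h x ∂μ := by
    have h_pos : 0 ≤ ∫ x in s ∩ P, f x * h x ∂μ :=
      setIntegral_nonneg (hs.inter hP) fun x hx => mul_nonneg (hf x).1 hx.2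
    have h_neg : ∫ x in s \ P, h x ∂μ ≤ ∫ x in s \ P, f x * h x ∂μ :=
      setIntegral_mono_on (hh.mono_set sdiff_subset) (hfh.mono_set sdiff_subset) (hs.diff hP)
        fun x hx => (one_mul (h x)).symm.trans_le
          (mul_le_mul_of_nonpos_right (hf x).2 (le_of_not_ge hx.2))
    linarith
  rcases le_max_iff.mp (abs_le_max_abs_abs h_lower h_upper) with h_le | h_le
  · exact ⟨s \ P, sdiff_subset, hs.diff hP, h_le⟩
  · exact ⟨s ∩ P, inter_subset_left, hs.inter hP, h_le⟩

theorem exists_abs_setIntegral_mul_le (hs : MeasurableSet s) (hf_meas : Measurable f)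
    (hf : ∀ x, f x ∈ Icc 0 1) (hh : IntegrableOn h s μ) :
    ∃ t ⊆ s, MeasurableSet t ∧ |∫ x in s, f x * h x ∂μ| ≤ |∫ x in t, h x ∂μ| := by
  set h' := hh.aestronglyMeasurable.mk h
  have hh' : h =ᵐ[μ.restrict s] h' := hh.aestronglyMeasurable.ae_eq_mk
  obtain ⟨t, hts, ht, h_le⟩ := exists_abs_setIntegral_mul_le_of_measurable hs hf_meas hf
    hh.aestronglyMeasurable.stronglyMeasurable_mk.measurable (hh.congr_fun_ae hh')
  refine ⟨t, hts, ht, ?_⟩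
  rwa [integral_congr_ae (hh'.mono fun x hx => by rw [hx]),
    integral_congr_ae (ae_restrict_of_ae_restrict_of_subset hts hh')]

end UnitWeight

section Fubini

variable {α β : Type*} [MeasurableSpace α] [MeasurableSpace β] {μ : Measure α} {ν : Measure β}
  [SFinite μ] [SFinite ν] {s : Set α} {t : Set β} {F : α × β → ℝ}

theorem exists_abs_setIntegral_prod_mul_fst_le (hs : MeasurableSet s) {f : α → ℝ}
    (hf_meas : Measurable f) (hf : ∀ x, f x ∈ Icc 0 1) (hF : IntegrableOn F (s ×ˢ t) (μ.prod ν)) :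
    ∃ S ⊆ s, MeasurableSet S ∧
      |∫ z in s ×ˢ t, f z.1 * F z ∂μ.prod ν| ≤ |∫ z in S ×ˢ t, F z ∂μ.prod ν| := by
  have h_slice : IntegrableOn (fun x => ∫ y in t, F (x, y) ∂ν) s μ := by
    rw [IntegrableOn, ← Measure.prod_restrict] at hF
    exact hF.integral_prod_left
  obtain ⟨S, hSs, hS, h_le⟩ := exists_abs_setIntegral_mul_le hs hf_meas hf h_slice
  refine ⟨S, hSs, hS, ?_⟩
  rw [setIntegral_prod _ (hF.mul_of_mem_Icc (f := fun z => f z.1) (by fun_prop) fun z => hf z.1),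
    setIntegral_prod _ (hF.mono_set (prod_mono hSs subset_rfl))]
  simpa only [integral_const_mul] using h_le

theorem exists_abs_setIntegral_prod_mul_snd_le (ht : MeasurableSet t) {g : β → ℝ}
    (hg_meas : Measurable g) (hg : ∀ y, g y ∈ Icc 0 1) (hF : IntegrableOn F (s ×ˢ t) (μ.prod ν)) :
    ∃ T ⊆ t, MeasurableSet T ∧
      |∫ z in s ×ˢ t, g z.2 * F z ∂μ.prod ν| ≤ |∫ z in s ×ˢ T, F z ∂μ.prod ν| := by
  obtain ⟨T, hTt, hT, h_le⟩ := exists_abs_setIntegral_prod_mul_fst_le ht hg_meas hg hF.swap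
  refine ⟨T, hTt, hT, ?_⟩
  rw [← setIntegral_prod_swap s t, ← setIntegral_prod_swap s T]
  exact h_le

theorem exists_abs_setIntegral_prod_mul_mul_le (hs : MeasurableSet s) (ht : MeasurableSet t)
    {f : α → ℝ} {g : β → ℝ} (hf_meas : Measurable f) (hf : ∀ x, f x ∈ Icc 0 1)
    (hg_meas : Measurable g) (hg : ∀ y, g y ∈ Icc 0 1) (hF : IntegrableOn F (s ×ˢ t) (μ.prod ν)) :
    ∃ S ⊆ s, ∃ T ⊆ t, MeasurableSet S ∧ MeasurableSet T ∧
      |∫ z in s ×ˢ t, f z.1 * g z.2 * F z ∂μ.prod ν| ≤ |∫ z in S ×ˢ T, F z ∂μ.prod ν| := by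
  obtain ⟨S, hSs, hS, h_fst⟩ := exists_abs_setIntegral_prod_mul_fst_le hs hf_meas hf
    (hF.mul_of_mem_Icc (f := fun z => g z.2) (by fun_prop) fun z => hg z.2)
  obtain ⟨T, hTt, hT, h_snd⟩ := exists_abs_setIntegral_prod_mul_snd_le ht hg_meas hg
    (hF.mono_set (prod_mono hSs subset_rfl))
  refine ⟨S, hSs, T, hTt, hS, hT, ?_⟩
  simpa only [mul_assoc] using h_fst.trans h_snd

end Fubini

theorem abs_setIntegral_le_cutNorm {V : ℝ × ℝ → ℝ} (hV : IntegrableOn V (Icc 0 1 ×ˢ Icc 0 1))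
    {S T : Set ℝ} (hS : MeasurableSet S) (hT : MeasurableSet T) (hSI : S ⊆ Icc 0 1)
    (hTI : T ⊆ Icc 0 1) : |∫ z in S ×ˢ T, V z| ≤ cutNorm V := by
  refine le_csSup ⟨∫ z in Icc 0 1 ×ˢ Icc 0 1, |V z|, ?_⟩ ⟨S, T, hS, hT, hSI, hTI, rfl⟩
  rintro r ⟨S', T', -, -, hSI', hTI', rfl⟩
  calc |∫ z in S' ×ˢ T', V z| ≤ ∫ z in S' ×ˢ T', |V z| := abs_integral_le_integral_abs
    _ ≤ ∫ z in Icc 0 1 ×ˢ Icc 0 1, |V z| :=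
      setIntegral_mono_set hV.abs (ae_of_all _ fun z => abs_nonneg _)
        (prod_mono hSI' hTI').eventuallyLE

theorem abs_setIntegral_mul_mul_le_cutNorm {V : ℝ × ℝ → ℝ}
    (hV : IntegrableOn V (Icc 0 1 ×ˢ Icc 0 1)) {f g : ℝ → ℝ} (hf_meas : Measurable f)
    (hf : ∀ x, f x ∈ Icc 0 1) (hg_meas : Measurable g) (hg : ∀ y, g y ∈ Icc 0 1) :
    |∫ z in Icc 0 1 ×ˢ Icc 0 1, f z.1 * g z.2 * V z| ≤ cutNorm V := by
  obtain ⟨S, hSI, T, hTI, hS, hT, h_le⟩ := exists_abs_setIntegral_prod_mul_mul_le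
    measurableSet_Icc measurableSet_Icc hf_meas hf hg_meas hg (μ := volume) (ν := volume) hV
  exact h_le.trans (abs_setIntegral_le_cutNorm hV hS hT hSI hTI)

theorem qbeta_sub_qbeta {q : ℕ} {U W : ℝ × ℝ → ℝ} (hU : IntegrableOn U (Icc 0 1 ×ˢ Icc 0 1))
    (hW : IntegrableOn W (Icc 0 1 ×ˢ Icc 0 1)) {ρ : Fin q → ℝ → ℝ} (i j : Fin q)
    (hρi_meas : Measurable (ρ i)) (hρi : ∀ x, ρ i x ∈ Icc 0 1) (hρj_meas : Measurable (ρ j))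
    (hρj : ∀ y, ρ j y ∈ Icc 0 1) :
    qbeta q U ρ i j - qbeta q W ρ i j =
      ∫ z in Icc 0 1 ×ˢ Icc 0 1, ρ i z.1 * ρ j z.2 * (U z - W z) := by
  have h_weight : ∀ {V : ℝ × ℝ → ℝ}, IntegrableOn V (Icc 0 1 ×ˢ Icc 0 1) →
      IntegrableOn (fun z => ρ i z.1 * (ρ j z.2 * V z)) (Icc 0 1 ×ˢ Icc 0 1) := fun hV =>
    (hV.mul_of_mem_Icc (f := fun z => ρ j z.2) (by fun_prop) fun z => hρj z.2).mul_of_mem_Icc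
      (f := fun z => ρ i z.1) (by fun_prop) fun z => hρi z.1
  simp only [qbeta, mul_sub, mul_assoc]
  exact (integral_sub (h_weight hU) (h_weight hW)).symm

theorem stmt9_general (q : ℕ) (U W : ℝ × ℝ → ℝ)
    (hU : IntegrableOn U (Set.Icc (0:ℝ) 1 ×ˢ Set.Icc (0:ℝ) 1))
    (hW : IntegrableOn W (Set.Icc (0:ℝ) 1 ×ˢ Set.Icc (0:ℝ) 1))
    (ρ : Fin q → ℝ → ℝ) (hρ : IsFracPartition q ρ) :
    d1Q (qalpha q ρ, qbeta q U ρ) (qalpha q ρ, qbeta q W ρ) ≤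
      (q : ℝ)^2 * cutNorm (fun z => U z - W z) := by
  have h_entry : ∀ i j, |qbeta q U ρ i j - qbeta q W ρ i j| ≤ cutNorm (fun z => U z - W z) :=
    fun i j => qbeta_sub_qbeta hU hW i j (hρ.1 i) (hρ.2.1 i) (hρ.1 j) (hρ.2.1 j) ▸
      abs_setIntegral_mul_mul_le_cutNorm (hU.sub hW) (hρ.1 i) (hρ.2.1 i) (hρ.1 j) (hρ.2.1 j)
  calc d1Q (qalpha q ρ, qbeta q U ρ) (qalpha q ρ, qbeta q W ρ)
      = ∑ i, ∑ j, |qbeta q U ρ i j - qbeta q W ρ i j| := by simp [d1Q]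
    _ ≤ ∑ _i : Fin q, ∑ _j : Fin q, cutNorm (fun z => U z - W z) :=
      Finset.sum_le_sum fun i _ => Finset.sum_le_sum fun j _ => h_entry i j
    _ = (q : ℝ)^2 * cutNorm (fun z => U z - W z) := by simp [sq, mul_assoc]

/-- `d₁(U/ρ, W/ρ) ≤ q² ‖U - W‖_□`. -/
theorem stmt9 (q : ℕ) (U W : ℝ × ℝ → ℝ)
    (hU : IntegrableOn U (Set.Icc (0:ℝ) 1 ×ˢ Set.Icc (0:ℝ) 1))
    (hW : IntegrableOn W (Set.Icc (0:ℝ) 1 ×ˢ Set.Icc (0:ℝ) 1))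
    (hUs : ∀ x y : ℝ, U (x, y) = U (y, x))
    (hWs : ∀ x y : ℝ, W (x, y) = W (y, x))
    (ρ : Fin q → ℝ → ℝ) (hρ : IsFracPartition q ρ) :
    d1Q (qalpha q ρ, qbeta q U ρ) (qalpha q ρ, qbeta q W ρ) ≤
      (q : ℝ)^2 * cutNorm (fun z => U z - W z) :=
  stmt9_general q U W hU hW ρ hρ
end

section
/- Let W be a graphon with K-bounded tails, i.e., for every ε > 0, ∫ |W| · 1{|W| ≥ K(ε)} ≤ ε. Then for any two fractional q-partitions ρ, ρ' of [0,1] and any ε > 0, ∑_{i,j} |β_{ij}(W/ρ) - β_{ij}(W/ρ')| ≤ 2 K(ε/8) d₁(ρ,ρ') + ε/2, where d₁(ρ,ρ') = ∑_i ∫|ρ_i - ρ'_i|. -/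
/-!
Pointwise, `T(x, y) = ∑_{i,j} |ρ_i(x)ρ_j(y) - ρ'_i(x)ρ'_j(y)|` is bounded both by
`f(x) + f(y)`, where `f = ∑_i |ρ_i - ρ'_i|`, and by `2`. Split `|W| ≤ min(|W|, K) + |W| 1{|W| ≥ K}`:
the first part against `f(x) + f(y)` integrates to at most `2 K d₁(ρ, ρ')`, the second against `2`
to twice the tail, which is at most `ε/4` for `K = K(ε/8)`.
-/

open MeasureTheory

structure IsFractionalPartition {α ι : Type*} [MeasurableSpace α] [Fintype ι]
    (ρ : ι → α → ℝ) : Prop where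
  measurable : ∀ i, Measurable (ρ i)
  nonneg : ∀ i x, 0 ≤ ρ i x
  sum_eq_one : ∀ x, ∑ i, ρ i x = 1

theorem IsFracPartition.isFractionalPartition {q : ℕ} {ρ : Fin q → ℝ → ℝ}
    (hρ : IsFracPartition q ρ) : IsFractionalPartition ρ :=
  ⟨hρ.1, fun i x => (hρ.2.1 i x).1, hρ.2.2⟩

section Pointwise

variable {ι : Type*} [Fintype ι]

theorem sum_sum_abs_mul_sub_mul_le {a b a' b' : ι → ℝ} (ha : ∀ i, 0 ≤ a i)
    (hb' : ∀ j, 0 ≤ b' j) (hsa : ∑ i, a i = 1) (hsb' : ∑ j, b' j = 1) :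
    ∑ i, ∑ j, |a i * b j - a' i * b' j| ≤ ∑ i, |a i - a' i| + ∑ j, |b j - b' j| :=
  calc ∑ i, ∑ j, |a i * b j - a' i * b' j|
      ≤ ∑ i, ∑ j, (a i * |b j - b' j| + |a i - a' i| * b' j) := by
        gcongr with i _ j _
        rw [show a i * b j - a' i * b' j = a i * (b j - b' j) + (a i - a' i) * b' j by ring]
        refine (abs_add_le _ _).trans_eq ?_
        rw [abs_mul, abs_mul, abs_of_nonneg (ha i), abs_of_nonneg (hb' j)]
    _ = (∑ i, a i) * ∑ j, |b j - b' j| + (∑ i, |a i - a' i|) * ∑ j, b' j := by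
        simp only [Finset.sum_mul_sum, ← Finset.sum_add_distrib]
    _ = ∑ i, |a i - a' i| + ∑ j, |b j - b' j| := by rw [hsa, hsb']; ring

theorem sum_sum_abs_mul_sub_mul_le_two {a b a' b' : ι → ℝ} (ha : ∀ i, 0 ≤ a i)
    (hb : ∀ j, 0 ≤ b j) (ha' : ∀ i, 0 ≤ a' i) (hb' : ∀ j, 0 ≤ b' j) (hsa : ∑ i, a i = 1)
    (hsb : ∑ j, b j = 1) (hsa' : ∑ i, a' i = 1) (hsb' : ∑ j, b' j = 1) :
    ∑ i, ∑ j, |a i * b j - a' i * b' j| ≤ 2 :=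
  calc ∑ i, ∑ j, |a i * b j - a' i * b' j|
      ≤ ∑ i, ∑ j, (a i * b j + a' i * b' j) := by
        gcongr with i _ j _
        refine (abs_sub _ _).trans_eq ?_
        rw [abs_of_nonneg (mul_nonneg (ha i) (hb j)), abs_of_nonneg (mul_nonneg (ha' i) (hb' j))]
    _ = (∑ i, a i) * (∑ j, b j) + (∑ i, a' i) * ∑ j, b' j := by
        simp only [Finset.sum_mul_sum, ← Finset.sum_add_distrib]
    _ = 2 := by rw [hsa, hsb, hsa', hsb']; norm_num

end Pointwise

section Tail

variable {β : Type*}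

noncomputable def tail (K : ℝ) (W : β → ℝ) : β → ℝ :=
  {z | K ≤ |W z|}.indicator fun z => |W z|

theorem mul_abs_le_mul_add_mul_tail {K S T C : ℝ} (W : β → ℝ) (z : β) (hK : 0 ≤ K)
    (hT : 0 ≤ T) (hTS : T ≤ S) (hTC : T ≤ C) :
    T * |W z| ≤ S * K + C * tail K W z := by
  by_cases h : K ≤ |W z|
  · have : tail K W z = |W z| := Set.indicator_of_mem (s := {z | K ≤ |W z|}) h _
    rw [this]
    nlinarith [abs_nonneg (W z)]
  · have : tail K W z = 0 := Set.indicator_of_notMem (s := {z | K ≤ |W z|}) h _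
    rw [this]
    nlinarith

theorem integrable_tail [MeasurableSpace β] {μ : Measure β} {W : β → ℝ} (hW : Integrable W μ)
    (K : ℝ) : Integrable (tail K W) μ :=
  hW.abs.integrableOn.integrable_indicator₀
    (nullMeasurableSet_le aemeasurable_const hW.aemeasurable.abs)

end Tail

namespace IsFractionalPartition

variable {α ι : Type*} [MeasurableSpace α] [Fintype ι] {ρ ρ' : ι → α → ℝ}

theorem le_one (hρ : IsFractionalPartition ρ) (i : ι) (x : α) : ρ i x ≤ 1 :=
  hρ.sum_eq_one x ▸ Finset.single_le_sum (fun j _ => hρ.nonneg j x) (Finset.mem_univ i)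

theorem sum_sum_abs_mul_sub_mul_le (hρ : IsFractionalPartition ρ)
    (hρ' : IsFractionalPartition ρ') (x y : α) :
    ∑ i, ∑ j, |ρ i x * ρ j y - ρ' i x * ρ' j y| ≤
      ∑ i, |ρ i x - ρ' i x| + ∑ j, |ρ j y - ρ' j y| :=
  _root_.sum_sum_abs_mul_sub_mul_le (hρ.nonneg · x) (hρ'.nonneg · y) (hρ.sum_eq_one x)
    (hρ'.sum_eq_one y)

theorem sum_sum_abs_mul_sub_mul_le_two (hρ : IsFractionalPartition ρ)
    (hρ' : IsFractionalPartition ρ') (x y : α) :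
    ∑ i, ∑ j, |ρ i x * ρ j y - ρ' i x * ρ' j y| ≤ 2 :=
  _root_.sum_sum_abs_mul_sub_mul_le_two (hρ.nonneg · x) (hρ.nonneg · y) (hρ'.nonneg · x)
    (hρ'.nonneg · y) (hρ.sum_eq_one x) (hρ.sum_eq_one y) (hρ'.sum_eq_one x) (hρ'.sum_eq_one y)

theorem integrable_mul_mul {μ : Measure (α × α)} {W : α × α → ℝ} (hρ : IsFractionalPartition ρ)
    (hW : Integrable W μ) (i j : ι) : Integrable (fun z => ρ i z.1 * ρ j z.2 * W z) μ := by
  refine hW.bdd_mul (c := 1) ?_ (ae_of_all _ fun z => ?_)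
  · exact (((hρ.measurable i).comp measurable_fst).mul
      ((hρ.measurable j).comp measurable_snd)).aestronglyMeasurable
  · rw [Real.norm_eq_abs, abs_of_nonneg (mul_nonneg (hρ.nonneg i z.1) (hρ.nonneg j z.2))]
    exact mul_le_one₀ (hρ.le_one i z.1) (hρ.nonneg j z.2) (hρ.le_one j z.2)

theorem integrable_abs_sub {ν : Measure α} [IsFiniteMeasure ν]
    (hρ : IsFractionalPartition ρ) (hρ' : IsFractionalPartition ρ') (i : ι) :
    Integrable (fun x => |ρ i x - ρ' i x|) ν := by
  refine .of_bound ((hρ.measurable i).sub (hρ'.measurable i)).abs.aestronglyMeasurable 1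
    (ae_of_all _ fun x => ?_)
  rw [Real.norm_eq_abs, abs_abs]
  exact abs_sub_le_of_nonneg_of_le (hρ.nonneg i x) (hρ.le_one i x) (hρ'.nonneg i x)
    (hρ'.le_one i x)

theorem sum_sum_abs_integral_sub_le {ν : Measure α} [IsProbabilityMeasure ν]
    (hρ : IsFractionalPartition ρ) (hρ' : IsFractionalPartition ρ') {W : α × α → ℝ}
    (hW : Integrable W (ν.prod ν)) {K : ℝ} (hK : 0 ≤ K) :
    ∑ i, ∑ j, |∫ z, ρ i z.1 * ρ j z.2 * W z ∂ν.prod ν - ∫ z, ρ' i z.1 * ρ' j z.2 * W z ∂ν.prod ν|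
      ≤ 2 * K * ∑ i, ∫ x, |ρ i x - ρ' i x| ∂ν + 2 * ∫ z, tail K W z ∂ν.prod ν := by
  set f : α → ℝ := fun x => ∑ i, |ρ i x - ρ' i x|
  have hf : Integrable f ν := integrable_finsetSum _ fun i _ => hρ.integrable_abs_sub hρ' i
  have hdiff (i j : ι) : Integrable
      (fun z => |ρ i z.1 * ρ j z.2 - ρ' i z.1 * ρ' j z.2| * |W z|) (ν.prod ν) := by
    refine ((hρ.integrable_mul_mul hW i j).sub (hρ'.integrable_mul_mul hW i j)).abs.congr
      (ae_of_all _ fun z => ?_)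
    simp only [Pi.sub_apply, ← abs_mul, sub_mul]
  have hf1 : Integrable (fun z : α × α => f z.1) (ν.prod ν) := hf.comp_fst ν
  have hf2 : Integrable (fun z : α × α => f z.2) (ν.prod ν) := hf.comp_snd ν
  have hfK : Integrable (fun z : α × α => (f z.1 + f z.2) * K) (ν.prod ν) :=
    (hf1.add hf2).mul_const K
  have htail : Integrable (fun z => 2 * tail K W z) (ν.prod ν) :=
    (integrable_tail hW K).const_mul 2
  calc _ ≤ ∑ i, ∑ j, ∫ z, |ρ i z.1 * ρ j z.2 - ρ' i z.1 * ρ' j z.2| * |W z| ∂ν.prod ν := by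
        gcongr with i _ j _
        rw [← integral_sub (hρ.integrable_mul_mul hW i j) (hρ'.integrable_mul_mul hW i j)]
        refine abs_integral_le_integral_abs.trans_eq ?_
        simp only [← abs_mul, sub_mul]
    _ = ∫ z, (∑ i, ∑ j, |ρ i z.1 * ρ j z.2 - ρ' i z.1 * ρ' j z.2|) * |W z| ∂ν.prod ν := by
        simp only [Finset.sum_mul]
        rw [integral_finsetSum _ fun i _ => integrable_finsetSum _ fun j _ => hdiff i j]
        exact Finset.sum_congr rfl fun i _ => (integral_finsetSum _ fun j _ => hdiff i j).symm
    _ ≤ ∫ z, (f z.1 + f z.2) * K + 2 * tail K W z ∂ν.prod ν := by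
        refine integral_mono_of_nonneg (ae_of_all _ fun z => by positivity) (hfK.add htail)
          (ae_of_all _ fun z => ?_)
        exact mul_abs_le_mul_add_mul_tail W z hK (by positivity)
          (hρ.sum_sum_abs_mul_sub_mul_le hρ' z.1 z.2)
          (hρ.sum_sum_abs_mul_sub_mul_le_two hρ' z.1 z.2)
    _ = 2 * K * ∫ x, f x ∂ν + 2 * ∫ z, tail K W z ∂ν.prod ν := by
        rw [integral_add hfK htail, integral_mul_const, integral_add hf1 hf2, integral_fun_fst,
          integral_fun_snd, integral_const_mul]
        simp only [probReal_univ, one_smul]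
        ring
    _ = _ := by rw [integral_finsetSum _ fun i _ => hρ.integrable_abs_sub hρ' i]

end IsFractionalPartition

theorem stmt11_general (q : ℕ) (W : ℝ × ℝ → ℝ) (K : ℝ → ℝ)
    (hW : IntegrableOn W (Set.Icc (0:ℝ) 1 ×ˢ Set.Icc (0:ℝ) 1))
    (hKpos : ∀ ε > 0, 0 < K ε)
    (htail : ∀ ε > 0,
      (∫ z in Set.Icc (0:ℝ) 1 ×ˢ Set.Icc (0:ℝ) 1,
        Set.indicator {z : ℝ × ℝ | K ε ≤ |W z|} (fun z => |W z|) z) ≤ ε)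
    (ρ ρ' : Fin q → ℝ → ℝ)
    (hρ : IsFracPartition q ρ) (hρ' : IsFracPartition q ρ') :
    ∀ ε > 0,
      (∑ i, ∑ j, |qbeta q W ρ i j - qbeta q W ρ' i j|) ≤
        2 * K (ε/8) * d1FP q ρ ρ' + ε/2 := by
  intro ε hε
  have hprod : volume.restrict (Set.Icc (0:ℝ) 1 ×ˢ Set.Icc (0:ℝ) 1) =
      (volume.restrict (Set.Icc (0:ℝ) 1)).prod (volume.restrict (Set.Icc (0:ℝ) 1)) :=
    (Measure.prod_restrict _ _).symm
  have : IsProbabilityMeasure (volume.restrict (Set.Icc (0:ℝ) 1)) := ⟨by simp⟩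
  have hβ : ∑ i, ∑ j, |qbeta q W ρ i j - qbeta q W ρ' i j| ≤ 2 * K (ε / 8) * d1FP q ρ ρ' +
      2 * ∫ z in Set.Icc (0:ℝ) 1 ×ˢ Set.Icc (0:ℝ) 1, tail (K (ε / 8)) W z := by
    have := hρ.isFractionalPartition.sum_sum_abs_integral_sub_le hρ'.isFractionalPartition
      (by rw [← hprod]; exact hW) (hKpos (ε / 8) (by positivity)).le
    rwa [← hprod] at this
  have htail8 : ∫ z in Set.Icc (0:ℝ) 1 ×ˢ Set.Icc (0:ℝ) 1, tail (K (ε / 8)) W z ≤ ε / 8 :=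
    htail (ε / 8) (by positivity)
  linarith

/-- For a graphon with `K`-bounded tails,
`∑_{i,j} |β_{ij}(W/ρ) - β_{ij}(W/ρ')| ≤ 2 K(ε/8) d₁(ρ,ρ') + ε/2`. -/
theorem stmt11 (q : ℕ) (W : ℝ × ℝ → ℝ) (K : ℝ → ℝ)
    (hW : IntegrableOn W (Set.Icc (0:ℝ) 1 ×ˢ Set.Icc (0:ℝ) 1))
    (hWs : ∀ x y : ℝ, W (x, y) = W (y, x))
    (hKpos : ∀ ε > 0, 0 < K ε)
    (htail : ∀ ε > 0,
      (∫ z in Set.Icc (0:ℝ) 1 ×ˢ Set.Icc (0:ℝ) 1,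
        Set.indicator {z : ℝ × ℝ | K ε ≤ |W z|} (fun z => |W z|) z) ≤ ε)
    (ρ ρ' : Fin q → ℝ → ℝ)
    (hρ : IsFracPartition q ρ) (hρ' : IsFracPartition q ρ') :
    ∀ ε > 0,
      (∑ i, ∑ j, |qbeta q W ρ i j - qbeta q W ρ' i j|) ≤
        2 * K (ε/8) * d1FP q ρ ρ' + ε/2 :=
  stmt11_general q W K hW hKpos htail ρ ρ' hρ hρ'
end

section
/- For every graphon W and every q ∈ ℕ, the set of fractional q-quotients Ŝ_q(W) = { W/ρ : ρ a fractional q-partition } is compact in ℝ^q × ℝ^{q×q} with the ℓ¹ metric. -/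
/-!
Let `ρⁿ` be fractional partitions. In `L²[0,1]` each `ρⁿᵢ` lies in a fixed ball, so by the
sequential Banach–Alaoglu theorem a subsequence converges weakly, `ρⁿᵢ ⇀ Gᵢ`. Testing against
indicators of sets shows that `0 ≤ Gᵢ` and `∑ᵢ Gᵢ = 1` almost everywhere, so after a change on a
null set `G` is again a fractional partition `ρ`. Weak convergence gives `α(ρⁿ) → α(ρ)` (test
against `1`) and, by Fubini, `β(ρⁿ) → β(ρ)` for every kernel `∑ₖ aₖ(x) bₖ(y)`. Such step kernels
are dense in `L¹([0,1]²)`, and `|β_W(σ) - β_{W'}(σ)| ≤ ‖W - W'‖₁` uniformly in `σ`, so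
`β(ρⁿ) → β(ρ)` for the graphon `W` as well. Hence the set of quotients is sequentially compact.
-/

open MeasureTheory

open Filter Topology Set

section WeakCompactness

variable {H : Type*} [NormedAddCommGroup H] [InnerProductSpace ℝ H] [CompleteSpace H]
  [TopologicalSpace.SeparableSpace H]

theorem exists_subseq_tendsto_inner (u : ℕ → H) {C : ℝ} (hu : ∀ n, ‖u n‖ ≤ C) :
    ∃ g : H, ∃ φ : ℕ → ℕ, StrictMono φ ∧
      ∀ h : H, Tendsto (fun m => inner ℝ (u (φ m)) h) atTop (𝓝 (inner ℝ g h)) := by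
  let x : ℕ → WeakDual ℝ H := fun n => StrongDual.toWeakDual (InnerProductSpace.toDual ℝ H (u n))
  have hx : ∀ n, x n ∈ WeakDual.toStrongDual ⁻¹' Metric.closedBall 0 C := fun n => by
    simpa [x] using hu n
  obtain ⟨y, -, φ, hφ, hlim⟩ := WeakDual.isSeqCompact_closedBall ℝ H 0 C hx
  refine ⟨(InnerProductSpace.toDual ℝ H).symm (WeakDual.toStrongDual y), φ, hφ, fun h => ?_⟩
  rw [InnerProductSpace.toDual_symm_apply]
  exact ((WeakDual.eval_continuous h).tendsto y).comp hlim

theorem exists_subseq_tendsto_inner_pi :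
    ∀ {q : ℕ} (u : ℕ → Fin q → H) {C : ℝ}, (∀ n i, ‖u n i‖ ≤ C) →
      ∃ g : Fin q → H, ∃ φ : ℕ → ℕ, StrictMono φ ∧
        ∀ i h, Tendsto (fun m => inner ℝ (u (φ m) i) h) atTop (𝓝 (inner ℝ (g i) h))
  | 0, _, _, _ => ⟨Fin.elim0, id, strictMono_id, fun i => i.elim0⟩
  | _ + 1, u, _, hu => by
    obtain ⟨g, φ, hφ, hg⟩ :=
      exists_subseq_tendsto_inner_pi (fun n i => u n i.succ) fun n i => hu n _
    obtain ⟨g₀, ψ, hψ, hg₀⟩ := exists_subseq_tendsto_inner (fun m => u (φ m) 0) fun m => hu _ 0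
    exact ⟨Fin.cons g₀ g, φ ∘ ψ, hφ.comp hψ,
      Fin.cases hg₀ fun i h => (hg i h).comp hψ.tendsto_atTop⟩

end WeakCompactness

section WeakL2

variable {α : Type*} [MeasurableSpace α] (μ : Measure α)

def WeakTendsto (f : ℕ → α → ℝ) (g : α → ℝ) : Prop :=
  ∀ h : α → ℝ, MemLp h 2 μ →
    Tendsto (fun m => ∫ x, f m x * h x ∂μ) atTop (𝓝 (∫ x, g x * h x ∂μ))

variable {μ} {f : ℕ → α → ℝ} {g : α → ℝ}

theorem WeakTendsto.congr_ae {g' : α → ℝ} (hf : WeakTendsto μ f g) (hg : g =ᵐ[μ] g') :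
    WeakTendsto μ f g' := fun h hh => by
  convert hf h hh using 2
  exact integral_congr_ae (hg.mono fun x hx => by rw [hx]) |>.symm

theorem WeakTendsto.tendsto_setIntegral (hf : WeakTendsto μ f g) {s : Set α}
    (hs : MeasurableSet s) (hμs : μ s ≠ ⊤) :
    Tendsto (fun m => ∫ x in s, f m x ∂μ) atTop (𝓝 (∫ x in s, g x ∂μ)) := by
  have key : ∀ u : α → ℝ, ∫ x, u x * s.indicator (fun _ => 1) x ∂μ = ∫ x in s, u x ∂μ :=
    fun u => by
      rw [← integral_indicator hs]
      congr 1 with x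
      by_cases hx : x ∈ s <;> simp [hx]
  simpa only [key] using hf _ (memLp_indicator_const 2 hs 1 (Or.inr hμs))

theorem MeasureTheory.L2.inner_toLp_eq_integral (u : Lp ℝ 2 μ) {h : α → ℝ} (hh : MemLp h 2 μ) :
    inner ℝ u (hh.toLp h) = ∫ x, u x * h x ∂μ := by
  rw [L2.inner_def]
  refine integral_congr_ae (hh.coeFn_toLp.mono fun x hx => ?_)
  simp [hx, mul_comm]

end WeakL2

namespace IsFracPartition

variable {q : ℕ} {ρ : Fin q → ℝ → ℝ}

theorem abs_le_one (hρ : IsFracPartition q ρ) (i : Fin q) (x : ℝ) : |ρ i x| ≤ 1 :=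
  abs_le.2 ⟨by linarith [(hρ.2.1 i x).1], (hρ.2.1 i x).2⟩

theorem memLp (hρ : IsFracPartition q ρ) (μ : Measure ℝ) [IsFiniteMeasure μ] (p : ENNReal)
    (i : Fin q) : MemLp (ρ i) p μ :=
  MemLp.of_bound (hρ.1 i).aestronglyMeasurable 1 (Eventually.of_forall (hρ.abs_le_one i))

theorem sum_setIntegral (hρ : IsFracPartition q ρ) (μ : Measure ℝ) [IsFiniteMeasure μ]
    (s : Set ℝ) : ∑ i, ∫ x in s, ρ i x ∂μ = μ.real s := by
  rw [← integral_finsetSum _ fun i _ => (hρ.memLp μ 1 i).integrable le_rfl |>.integrableOn]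
  simp [hρ.2.2]

-- Replace `G` by `ρ` on a measurable null set containing the points where `G` misbehaves.
theorem exists_ae_eq (hρ : IsFracPartition q ρ) {μ : Measure ℝ} {G : Fin q → ℝ → ℝ}
    (hG : ∀ i, Measurable (G i))
    (hGae : ∀ᵐ x ∂μ, (∀ i, G i x ∈ Icc (0 : ℝ) 1) ∧ ∑ i, G i x = 1) :
    ∃ ρ' : Fin q → ℝ → ℝ, IsFracPartition q ρ' ∧ ∀ i, ρ' i =ᵐ[μ] G i := by
  classical
  obtain ⟨t, hbad, ht, hμt⟩ := exists_measurable_superset_of_null (ae_iff.1 hGae)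
  refine ⟨fun i x => if x ∈ t then ρ i x else G i x,
    ⟨fun i => Measurable.ite ht (hρ.1 i) (hG i), fun i x => ?_, fun x => ?_⟩, fun i => ?_⟩
  · by_cases hx : x ∈ t
    · simpa [hx] using hρ.2.1 i x
    · simpa [hx] using (not_not.1 fun h => hx (hbad h)).1 i
  · by_cases hx : x ∈ t
    · simpa [hx] using hρ.2.2 x
    · simpa [hx] using (not_not.1 fun h => hx (hbad h)).2
  · filter_upwards [measure_eq_zero_iff_ae_notMem.1 hμt] with x hx
    simp [hx]

theorem ae_of_weakTendsto {μ : Measure ℝ} [IsFiniteMeasure μ] {ρs : ℕ → Fin q → ℝ → ℝ}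
    (hρs : ∀ m, IsFracPartition q (ρs m)) {G : Fin q → ℝ → ℝ} (hGi : ∀ i, Integrable (G i) μ)
    (hG : ∀ i, WeakTendsto μ (fun m => ρs m i) (G i)) :
    ∀ᵐ x ∂μ, (∀ i, G i x ∈ Icc (0 : ℝ) 1) ∧ ∑ i, G i x = 1 := by
  have hset : ∀ i {s}, MeasurableSet s →
      Tendsto (fun m => ∫ x in s, ρs m i x ∂μ) atTop (𝓝 (∫ x in s, G i x ∂μ)) :=
    fun i _ hs => (hG i).tendsto_setIntegral hs (measure_ne_top μ _)
  have hnonneg : ∀ i, 0 ≤ᵐ[μ] G i := fun i =>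
    ae_nonneg_of_forall_setIntegral_nonneg (hGi i) fun s hs _ =>
      ge_of_tendsto' (hset i hs) fun m => setIntegral_nonneg hs fun x _ => ((hρs m).2.1 i x).1
  have hsum : (fun x => ∑ i, G i x) =ᵐ[μ] fun _ => 1 := by
    refine ae_eq_of_forall_setIntegral_eq_of_sigmaFinite
      (fun s _ _ => (integrable_finsetSum _ fun i _ => hGi i).integrableOn)
      (fun s _ _ => (integrable_const 1).integrableOn) fun s hs _ => ?_
    rw [integral_finsetSum _ fun i _ => (hGi i).integrableOn, setIntegral_const, smul_eq_mul,
      mul_one]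
    refine tendsto_nhds_unique (tendsto_finsetSum _ fun i _ => hset i hs) ?_
    simp only [(hρs _).sum_setIntegral μ s, tendsto_const_nhds]
  filter_upwards [ae_all_iff.2 hnonneg, hsum] with x h0 h1
  refine ⟨fun i => ⟨h0 i, ?_⟩, h1⟩
  rw [← h1]
  exact Finset.single_le_sum (fun j _ => h0 j) (Finset.mem_univ i)

theorem exists_subseq_weakTendsto (μ : Measure ℝ) [IsFiniteMeasure μ]
    {ρs : ℕ → Fin q → ℝ → ℝ} (hρs : ∀ m, IsFracPartition q (ρs m)) :
    ∃ ρ, IsFracPartition q ρ ∧ ∃ φ : ℕ → ℕ, StrictMono φ ∧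
      ∀ i, WeakTendsto μ (fun m => ρs (φ m) i) (ρ i) := by
  have : Fact ((2 : ENNReal) ≠ ⊤) := ⟨ENNReal.ofNat_ne_top⟩
  let u : ℕ → Fin q → Lp ℝ 2 μ := fun m i => ((hρs m).memLp μ 2 i).toLp
  have hu : ∀ m i, ‖u m i‖ ≤ measureUnivNNReal μ ^ (2 : ENNReal).toReal⁻¹ * 1 := fun m i =>
    Lp.norm_le_of_ae_bound zero_le_one <| ((hρs m).memLp μ 2 i).coeFn_toLp.mono fun x hx => by
      simpa [u, hx] using (hρs m).abs_le_one i x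
  obtain ⟨g, φ, hφ, hg⟩ := exists_subseq_tendsto_inner_pi u hu
  have hG : ∀ i, WeakTendsto μ (fun m => ρs (φ m) i) (g i) := fun i h hh => by
    have hρu : ∀ m, inner ℝ (u (φ m) i) (hh.toLp h) = ∫ x, ρs (φ m) i x * h x ∂μ := fun m => by
      rw [L2.inner_toLp_eq_integral]
      exact integral_congr_ae (((hρs (φ m)).memLp μ 2 i).coeFn_toLp.mono fun x hx => by
        simp [u, hx])
    simpa only [hρu, L2.inner_toLp_eq_integral] using hg i (hh.toLp h)
  obtain ⟨ρ, hρ, hρg⟩ := (hρs 0).exists_ae_eq (fun i => (Lp.stronglyMeasurable (g i)).measurable)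
    (ae_of_weakTendsto (fun m => hρs (φ m)) (fun i => (Lp.memLp (g i)).integrable one_le_two) hG)
  exact ⟨ρ, hρ, φ, hφ, fun i => (hG i).congr_ae (hρg i).symm⟩

end IsFracPartition

theorem tendsto_of_forall_approx {ι X : Type*} [PseudoMetricSpace X] {l : Filter ι} {u : ι → X}
    {a : X} (h : ∀ ε > 0, ∃ (v : ι → X) (b : X), Tendsto v l (𝓝 b) ∧
      (∀ m, dist (u m) (v m) ≤ ε) ∧ dist a b ≤ ε) :
    Tendsto u l (𝓝 a) := by
  refine Metric.tendsto_nhds.2 fun ε hε => ?_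
  obtain ⟨v, b, hv, huv, hab⟩ := h (ε / 4) (by positivity)
  filter_upwards [Metric.tendsto_nhds.1 hv (ε / 4) (by positivity)] with m hm
  calc dist (u m) a ≤ dist (u m) (v m) + dist (v m) b + dist a b := by
        rw [dist_comm a b]; exact dist_triangle4 _ _ _ _
    _ < ε := by linarith [huv m]

theorem abs_integral_mul_sub_integral_mul_le {α : Type*} [MeasurableSpace α] {μ : Measure α}
    {w K L : α → ℝ} (hw : AEStronglyMeasurable w μ) (hw1 : ∀ x, |w x| ≤ 1)
    (hK : Integrable K μ) (hL : Integrable L μ) :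
    |∫ x, w x * K x ∂μ - ∫ x, w x * L x ∂μ| ≤ ∫ x, |K x - L x| ∂μ := by
  have hwb : ∀ᵐ x ∂μ, ‖w x‖ ≤ 1 := Eventually.of_forall hw1
  rw [← integral_sub (hK.bdd_mul hw hwb) (hL.bdd_mul hw hwb), ← Real.norm_eq_abs]
  refine norm_integral_le_of_norm_le (hK.sub hL).abs (Eventually.of_forall fun x => ?_)
  rw [← mul_sub, Real.norm_eq_abs, abs_mul]
  exact mul_le_of_le_one_left (abs_nonneg _) (hw1 x)

section SeparableKernels

variable {α : Type*} [MeasurableSpace α] {μ : Measure α}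

theorem integrable_sum_mul_prod [SFinite μ] {ι : Type*} (s : Finset ι) {a b : ι → α → ℝ}
    (ha : ∀ k, Integrable (a k) μ) (hb : ∀ k, Integrable (b k) μ) :
    Integrable (fun z : α × α => ∑ k ∈ s, a k z.1 * b k z.2) (μ.prod μ) :=
  integrable_finsetSum _ fun k _ => (ha k).mul_prod (hb k)

theorem WeakTendsto.tendsto_integral_mul_sum_mul_prod [SFinite μ] {f g : ℕ → α → ℝ}
    {F G : α → ℝ} (hf : WeakTendsto μ f F) (hg : WeakTendsto μ g G)
    (hfm : ∀ m, MemLp (f m) 2 μ) (hgm : ∀ m, MemLp (g m) 2 μ) (hF : MemLp F 2 μ)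
    (hG : MemLp G 2 μ) {ι : Type*} (s : Finset ι) {a b : ι → α → ℝ}
    (ha : ∀ k, MemLp (a k) 2 μ) (hb : ∀ k, MemLp (b k) 2 μ) :
    Tendsto (fun m => ∫ z, f m z.1 * g m z.2 * ∑ k ∈ s, a k z.1 * b k z.2 ∂μ.prod μ) atTop
      (𝓝 (∫ z, F z.1 * G z.2 * ∑ k ∈ s, a k z.1 * b k z.2 ∂μ.prod μ)) := by
  have hsplit : ∀ u v : α → ℝ, MemLp u 2 μ → MemLp v 2 μ →
      ∫ z, u z.1 * v z.2 * ∑ k ∈ s, a k z.1 * b k z.2 ∂μ.prod μ =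
        ∑ k ∈ s, (∫ x, u x * a k x ∂μ) * ∫ y, v y * b k y ∂μ := fun u v hu hv => by
    simp_rw [Finset.mul_sum]
    rw [integral_finsetSum _ fun k _ =>
      ((hu.integrable_mul (ha k)).mul_prod (hv.integrable_mul (hb k))).congr
        (Eventually.of_forall fun z => by simp only [Pi.mul_apply]; ring)]
    refine Finset.sum_congr rfl fun k _ => ?_
    rw [← integral_prod_mul]
    congr 1 with z
    ring
  simp only [hsplit _ _ (hfm _) (hgm _), hsplit _ _ hF hG]
  exact tendsto_finsetSum _ fun k _ => (hf _ (ha k)).mul (hg _ (hb k))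

variable (μ) in
def ApproxBySeparable (K : α × α → ℝ) : Prop :=
  ∀ ε > 0, ∃ (s : Finset (ℕ × ℕ)) (a b : ℕ × ℕ → α → ℝ), (∀ k, MemLp (a k) 2 μ) ∧
    (∀ k, MemLp (b k) 2 μ) ∧ ∫ z, |K z - ∑ k ∈ s, a k z.1 * b k z.2| ∂μ.prod μ ≤ ε

end SeparableKernels

theorem IsFracPartition.tendsto_integral_mul_mul_of_weakTendsto {q : ℕ} {μ : Measure ℝ}
    [IsFiniteMeasure μ] {ρs : ℕ → Fin q → ℝ → ℝ} {ρ : Fin q → ℝ → ℝ}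
    (hρs : ∀ m, IsFracPartition q (ρs m)) (hρ : IsFracPartition q ρ)
    (hlim : ∀ i, WeakTendsto μ (fun m => ρs m i) (ρ i)) {K : ℝ × ℝ → ℝ}
    (hK : Integrable K (μ.prod μ)) (hKs : ApproxBySeparable μ K) (i j : Fin q) :
    Tendsto (fun m => ∫ z, ρs m i z.1 * ρs m j z.2 * K z ∂μ.prod μ) atTop
      (𝓝 (∫ z, ρ i z.1 * ρ j z.2 * K z ∂μ.prod μ)) := by
  have hbound : ∀ σ : Fin q → ℝ → ℝ, IsFracPartition q σ → ∀ L : ℝ × ℝ → ℝ,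
      Integrable L (μ.prod μ) →
      dist (∫ z, σ i z.1 * σ j z.2 * K z ∂μ.prod μ) (∫ z, σ i z.1 * σ j z.2 * L z ∂μ.prod μ) ≤
        ∫ z, |K z - L z| ∂μ.prod μ := fun σ hσ L hL =>
    abs_integral_mul_sub_integral_mul_le
      (((hσ.1 i).comp measurable_fst).mul ((hσ.1 j).comp measurable_snd)).aestronglyMeasurable
      (fun z => by
        rw [abs_mul]
        exact mul_le_one₀ (hσ.abs_le_one i _) (abs_nonneg _) (hσ.abs_le_one j _))
      hK hL
  refine tendsto_of_forall_approx fun ε hε => ?_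
  obtain ⟨s, a, b, ha, hb, hKS⟩ := hKs ε hε
  have hS := integrable_sum_mul_prod s (fun k => (ha k).integrable one_le_two)
    (fun k => (hb k).integrable one_le_two)
  exact ⟨_, _, (hlim i).tendsto_integral_mul_sum_mul_prod (hlim j) (fun m => (hρs m).memLp μ 2 i)
    (fun m => (hρs m).memLp μ 2 j) (hρ.memLp μ 2 i) (hρ.memLp μ 2 j) s ha hb,
    fun m => (hbound _ (hρs m) _ hS).trans hKS, (hbound _ hρ _ hS).trans hKS⟩

theorem abs_sub_natFloor_mul_div_lt {n : ℕ} (hn : 0 < n) {x : ℝ} (hx : 0 ≤ x) :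
    |x - ⌊n * x⌋₊ / n| < 1 / n := by
  have hn' : (0 : ℝ) < n := Nat.cast_pos.2 hn
  have h1 := Nat.floor_le (mul_nonneg hn'.le hx)
  have h2 := Nat.lt_floor_add_one ((n : ℝ) * x)
  rw [show x - ⌊n * x⌋₊ / n = (n * x - ⌊n * x⌋₊) / n by field_simp, abs_div, abs_of_pos hn',
    div_lt_div_iff_of_pos_right hn', abs_lt]
  constructor <;> linarith

theorem sum_indicator_natFloor_mul_eq {n : ℕ} (c : ℕ × ℕ → ℝ) {x y : ℝ}
    (hx : x ∈ Icc (0 : ℝ) 1) (hy : y ∈ Icc (0 : ℝ) 1) :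
    ∑ k ∈ Finset.range (n + 1) ×ˢ Finset.range (n + 1),
      {t : ℝ | ⌊n * t⌋₊ = k.1}.indicator (fun _ => c k) x *
        {t : ℝ | ⌊n * t⌋₊ = k.2}.indicator (fun _ => 1) y = c (⌊n * x⌋₊, ⌊n * y⌋₊) := by
  have hfloor : ∀ t ∈ Icc (0 : ℝ) 1, ⌊n * t⌋₊ ∈ Finset.range (n + 1) := fun t ht =>
    Finset.mem_range_succ_iff.2 <| Nat.floor_le_of_le <| by
      simpa using mul_le_of_le_one_right (Nat.cast_nonneg n) ht.2
  rw [Finset.sum_eq_single_of_mem (⌊n * x⌋₊, ⌊n * y⌋₊)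
    (Finset.mem_product.2 ⟨hfloor x hx, hfloor y hy⟩)]
  · simp
  · rintro ⟨k₁, k₂⟩ - hk
    simp only [indicator_apply]
    split_ifs with h₁ h₂ <;> simp_all

theorem MeasureTheory.Measure.volume_restrict_prod {α β : Type*} [MeasureSpace α]
    [MeasureSpace β] [SFinite (volume : Measure α)] [SFinite (volume : Measure β)]
    (s : Set α) (t : Set β) :
    volume.restrict (s ×ˢ t) = (volume.restrict s).prod (volume.restrict t) := by
  rw [Measure.prod_restrict, ← Measure.volume_eq_prod]

theorem approxBySeparable_volume_Icc {K : ℝ × ℝ → ℝ}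
    (hK : IntegrableOn K (Icc (0 : ℝ) 1 ×ˢ Icc (0 : ℝ) 1)) :
    ApproxBySeparable (volume.restrict (Icc (0 : ℝ) 1)) K := by
  intro ε hε
  set sq := Icc (0 : ℝ) 1 ×ˢ Icc (0 : ℝ) 1
  have hsq : MeasurableSet sq := measurableSet_Icc.prod measurableSet_Icc
  obtain ⟨g, hgc, hgK, hgcont, hgi⟩ :=
    (hK.integrable_indicator hsq).exists_hasCompactSupport_integral_sub_le (half_pos hε)
  obtain ⟨δ, hδ, hgδ⟩ :=
    Metric.uniformContinuous_iff.1 (hgc.uniformContinuous_of_continuous hgcont) _ (half_pos hε)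
  obtain ⟨n, hn⟩ := exists_nat_gt (1 / δ)
  have hn0 : 0 < n := Nat.cast_pos.1 ((one_div_pos.2 hδ).trans hn)
  have hnδ : 1 / (n : ℝ) < δ := by
    rwa [one_div_lt (Nat.cast_pos.2 hn0) hδ]
  -- `cell a = [a/n, (a+1)/n)`; the step kernel takes the value of `g` at the lower left corner
  -- of each grid square.
  let cell : ℕ → Set ℝ := fun a => {x | ⌊n * x⌋₊ = a}
  have hcell : ∀ a, MeasurableSet (cell a) := fun a =>
    measurableSet_eq_fun (Nat.measurable_floor.comp (measurable_const_mul _)) measurable_const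
  let corner : ℝ × ℝ → ℝ × ℝ := fun z => (⌊n * z.1⌋₊ / n, ⌊n * z.2⌋₊ / n)
  let s := Finset.range (n + 1) ×ˢ Finset.range (n + 1)
  let a : ℕ × ℕ → ℝ → ℝ := fun k => (cell k.1).indicator fun _ => g (k.1 / n, k.2 / n)
  let b : ℕ × ℕ → ℝ → ℝ := fun k => (cell k.2).indicator fun _ => 1
  have hstep : ∀ z ∈ sq, ∑ k ∈ s, a k z.1 * b k z.2 = g (corner z) := fun z hz =>
    sum_indicator_natFloor_mul_eq _ hz.1 hz.2
  have hclose : ∀ z ∈ sq, |K z - ∑ k ∈ s, a k z.1 * b k z.2| ≤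
      |sq.indicator K z - g z| + ε / 2 := by
    intro z hz
    have hcorner : dist z (corner z) < δ := by
      rw [Prod.dist_eq, Real.dist_eq, Real.dist_eq]
      exact max_lt ((abs_sub_natFloor_mul_div_lt hn0 hz.1.1).trans hnδ)
        ((abs_sub_natFloor_mul_div_lt hn0 hz.2.1).trans hnδ)
    have hg := (hgδ hcorner).le
    rw [Real.dist_eq] at hg
    rw [hstep z hz, indicator_of_mem hz]
    calc |K z - g (corner z)| ≤ |K z - g z| + |g z - g (corner z)| := abs_sub_le _ _ _
      _ ≤ _ := by gcongr
  refine ⟨s, a, b, fun k => memLp_indicator_const 2 (hcell _) _ (Or.inr (measure_ne_top _ _)),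
    fun k => memLp_indicator_const 2 (hcell _) _ (Or.inr (measure_ne_top _ _)), ?_⟩
  rw [← Measure.volume_restrict_prod]
  have : IsFiniteMeasure (volume.restrict sq) := by
    rw [Measure.volume_restrict_prod]; infer_instance
  have hdiff : Integrable (fun z => |sq.indicator K z - g z|) (volume.restrict sq) :=
    ((hK.integrable_indicator hsq).sub hgi).abs.restrict
  calc ∫ z in sq, |K z - ∑ k ∈ s, a k z.1 * b k z.2|
      ≤ ∫ z in sq, (|sq.indicator K z - g z| + ε / 2) :=
        integral_mono_of_nonneg (Eventually.of_forall fun _ => abs_nonneg _)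
          (hdiff.add (integrable_const _)) ((ae_restrict_mem hsq).mono hclose)
    _ = (∫ z in sq, ‖sq.indicator K z - g z‖) + ε / 2 := by
        rw [integral_add hdiff (integrable_const _), setIntegral_const, measureReal_def,
          Measure.volume_eq_prod, Measure.prod_prod]
        simp [Real.norm_eq_abs]
    _ ≤ ε / 2 + ε / 2 := by
        gcongr
        exact (setIntegral_le_integral ((hK.integrable_indicator hsq).sub hgi).norm
          (Eventually.of_forall fun _ => norm_nonneg _)).trans hgK
    _ = ε := add_halves ε

theorem stmt12_general (q : ℕ) (W : ℝ × ℝ → ℝ)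
    (hW : IntegrableOn W (Set.Icc (0:ℝ) 1 ×ˢ Set.Icc (0:ℝ) 1)) :
    IsCompact {p : (Fin q → ℝ) × (Fin q → Fin q → ℝ) |
      ∃ ρ : Fin q → ℝ → ℝ, IsFracPartition q ρ ∧ p = (qalpha q ρ, qbeta q W ρ)} := by
  refine IsSeqCompact.isCompact fun p hp => ?_
  choose ρs hρs hp using hp
  obtain ⟨ρ, hρ, φ, hφ, hlim⟩ :=
    IsFracPartition.exists_subseq_weakTendsto (volume.restrict (Icc (0 : ℝ) 1)) hρs
  refine ⟨_, ⟨ρ, hρ, rfl⟩, φ, hφ, ?_⟩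
  simp only [Function.comp_def, hp]
  refine (tendsto_pi_nhds.2 fun i => ?_).prodMk_nhds
    (tendsto_pi_nhds.2 fun i => tendsto_pi_nhds.2 fun j => ?_)
  · simpa [qalpha] using hlim i 1 (memLp_const 1)
  · simp only [qbeta, Measure.volume_restrict_prod]
    exact IsFracPartition.tendsto_integral_mul_mul_of_weakTendsto (fun m => hρs (φ m)) hρ hlim
      (by rwa [← Measure.volume_restrict_prod]) (approxBySeparable_volume_Icc hW) i j

/-- The set of fractional `q`-quotients of a graphon `W` is compact. -/
theorem stmt12 (q : ℕ) (W : ℝ × ℝ → ℝ)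
    (hW : IntegrableOn W (Set.Icc (0:ℝ) 1 ×ˢ Set.Icc (0:ℝ) 1))
    (hWs : ∀ x y : ℝ, W (x, y) = W (y, x)) :
    IsCompact {p : (Fin q → ℝ) × (Fin q → Fin q → ℝ) |
      ∃ ρ : Fin q → ℝ → ℝ, IsFracPartition q ρ ∧ p = (qalpha q ρ, qbeta q W ρ)} :=
  stmt12_general q W hW
end

section
/- Every sequence ρ^{(n)} of fractional q-partitions of [0,1] contains a subsequence converging to some fractional q-partition ρ over rational intervals, meaning ∫_D ρ_i^{(n)} → ∫_D ρ_i for every interval D ⊆ [0,1] with rational endpoints and every i ∈ [q]. -/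
/-!
Each `ρᵢ⁽ⁿ⁾` has the primitive `Fᵢ⁽ⁿ⁾(x) = ∫₀ˣ ρᵢ⁽ⁿ⁾`, a monotone `1`-Lipschitz function with
`|Fᵢ⁽ⁿ⁾(r)| ≤ |r|`. Compactness of a countable product of intervals (the diagonal argument) gives a
subsequence along which `Fᵢ⁽ⁿ⁾(r)` converges for every rational `r`, and equicontinuity upgrades
this to convergence at every real `x`. The limits `Gᵢ` are monotone, `1`-Lipschitz and satisfy
`∑ᵢ Gᵢ(x) = x`, so their Stieltjes measures add up to Lebesgue measure. Radon–Nikodym densities of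
these measures, redefined on a null set, form the limiting fractional partition `ρ`, and
`∫ₐᵇ ρᵢ = Gᵢ(b) - Gᵢ(a)` is the limit of `∫ₐᵇ ρᵢ⁽ⁿ⁾`.
-/

open MeasureTheory Filter

open Set
open scoped NNReal ENNReal Topology

theorem exists_subseq_tendsto_of_abs_le {ι : Type*} [Countable ι] {u : ℕ → ι → ℝ}
    {C : ι → ℝ} (hu : ∀ n i, |u n i| ≤ C i) :
    ∃ φ : ℕ → ℕ, StrictMono φ ∧ ∀ i, ∃ y, Tendsto (fun n => u (φ n) i) atTop (𝓝 y) := by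
  obtain ⟨y, -, φ, hφ, hy⟩ := (isCompact_univ_pi fun i => isCompact_Icc).tendsto_subseq
    fun n => mem_univ_pi.2 fun i => abs_le.1 (hu n i)
  exact ⟨φ, hφ, fun i => ⟨y i, tendsto_pi_nhds.1 hy i⟩⟩

theorem Dense.exists_tendsto_of_lipschitzWith {X Y : Type*} [PseudoMetricSpace X]
    [PseudoMetricSpace Y] [CompleteSpace Y] {s : Set X} (hs : Dense s) {K : ℝ≥0}
    {f : ℕ → X → Y} (hf : ∀ n, LipschitzWith K (f n))
    (hconv : ∀ y ∈ s, ∃ z, Tendsto (fun n => f n y) atTop (𝓝 z)) (x : X) :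
    ∃ z, Tendsto (fun n => f n x) atTop (𝓝 z) := by
  refine cauchySeq_tendsto_of_complete (Metric.cauchySeq_iff.2 fun ε hε => ?_)
  obtain ⟨y, hys, hxy⟩ := hs.exists_dist_lt x (show 0 < ε / 3 / (K + 1) by positivity)
  have hclose n : dist (f n x) (f n y) < ε / 3 :=
    calc dist (f n x) (f n y) ≤ K * dist x y := (hf n).dist_le_mul x y
      _ ≤ (K + 1) * dist x y := by gcongr; linarith
      _ < (K + 1) * (ε / 3 / (K + 1)) := by gcongr
      _ = ε / 3 := by field_simp
  obtain ⟨z, hz⟩ := hconv y hys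
  obtain ⟨N, hN⟩ := Metric.cauchySeq_iff.1 hz.cauchySeq (ε / 3) (by positivity)
  refine ⟨N, fun m hm n hn => ?_⟩
  calc dist (f m x) (f n x)
      ≤ dist (f m x) (f m y) + dist (f m y) (f n y) + dist (f n y) (f n x) :=
        dist_triangle4 _ _ _ _
    _ < ε / 3 + ε / 3 + ε / 3 := by
        gcongr
        · exact hclose m
        · exact hN m hm n hn
        · exact dist_comm (f n y) (f n x) ▸ hclose n
    _ = ε := by ring

section Primitive

variable {E : Type*} [NormedAddCommGroup E] {f : ℝ → E} {C : ℝ≥0}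

theorem intervalIntegrable_of_norm_le (hf : AEStronglyMeasurable f) (hC : ∀ x, ‖f x‖ ≤ C)
    (a b : ℝ) : IntervalIntegrable f volume a b :=
  intervalIntegrable_const.mono_fun' hf.restrict (ae_of_all _ hC)

theorem lipschitzWith_primitive [NormedSpace ℝ E] (hf : AEStronglyMeasurable f)
    (hC : ∀ x, ‖f x‖ ≤ C) (a : ℝ) : LipschitzWith C fun x => ∫ t in a..x, f t := by
  refine LipschitzWith.of_dist_le_mul fun x y => ?_
  rw [dist_eq_norm, intervalIntegral.integral_interval_sub_left
    (intervalIntegrable_of_norm_le hf hC _ _) (intervalIntegrable_of_norm_le hf hC _ _),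
    Real.dist_eq]
  exact intervalIntegral.norm_integral_le_of_norm_le_const fun t _ => hC t

end Primitive

theorem monotone_primitive {f : ℝ → ℝ} (hf : ∀ a b, IntervalIntegrable f volume a b)
    (hf₀ : 0 ≤ f) (a : ℝ) : Monotone fun x => ∫ t in a..x, f t := fun x y hxy => by
  rw [← sub_nonneg, intervalIntegral.integral_interval_sub_left (hf a y) (hf a x)]
  exact intervalIntegral.integral_nonneg hxy fun t _ => hf₀ t

theorem exists_subseq_tendsto_primitive {ι : Type*} [Countable ι] {f : ℕ → ι → ℝ → ℝ}
    {C : ℝ≥0} (hf : ∀ n i, AEStronglyMeasurable (f n i)) (hC : ∀ n i x, ‖f n i x‖ ≤ C) :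
    ∃ φ : ℕ → ℕ, StrictMono φ ∧ ∃ G : ι → ℝ → ℝ, ∀ i x,
      Tendsto (fun n => ∫ t in (0 : ℝ)..x, f (φ n) i t) atTop (𝓝 (G i x)) := by
  have hlip n i := lipschitzWith_primitive (hf n i) (hC n i) 0
  obtain ⟨φ, hφ, hconv⟩ := exists_subseq_tendsto_of_abs_le
    (u := fun n (p : ι × ℚ) => ∫ t in (0 : ℝ)..(p.2 : ℝ), f n p.1 t)
    (C := fun p => C * ‖p.2‖) fun n p => by
      simpa using (hlip n p.1).dist_le_mul p.2 0
  have hext i x : ∃ y, Tendsto (fun n => ∫ t in (0 : ℝ)..x, f (φ n) i t) atTop (𝓝 y) :=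
    Dense.exists_tendsto_of_lipschitzWith Rat.denseRange_cast (fun n => hlip (φ n) i)
      (by rintro _ ⟨r, rfl⟩; exact hconv (i, r)) x
  choose G hG using hext
  exact ⟨φ, hφ, G, hG⟩

namespace MeasureTheory.Measure

variable {α ι : Type*} [MeasurableSpace α] [Fintype ι] {μ : ι → Measure α} {ν : Measure α}

theorem le_of_sum_eq (hsum : ∑ i, μ i = ν) (i : ι) : μ i ≤ ν :=
  hsum ▸ Finset.single_le_sum (fun j _ => Measure.zero_le (μ j)) (Finset.mem_univ i)

variable [SigmaFinite ν]

theorem withDensity_rnDeriv_of_sum_eq (hsum : ∑ i, μ i = ν) (i : ι) :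
    ν.withDensity ((μ i).rnDeriv ν) = μ i :=
  have := sigmaFinite_of_le ν (le_of_sum_eq hsum i)
  withDensity_rnDeriv_eq _ _ (absolutelyContinuous_of_le (le_of_sum_eq hsum i))

theorem ae_sum_rnDeriv_eq_one (hsum : ∑ i, μ i = ν) :
    ∀ᵐ x ∂ν, ∑ i, (μ i).rnDeriv ν x = 1 := by
  have hsum_rnDeriv : ∑ i, (μ i).rnDeriv ν =ᵐ[ν] fun _ => 1 := by
    refine (withDensity_eq_iff_of_sigmaFinite
      (Finset.aemeasurable_sum _ fun i _ => (measurable_rnDeriv _ _).aemeasurable)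
      aemeasurable_const).1 ?_
    rw [withDensity_const, one_smul, ← tsum_fintype _ (L := .unconditional _),
      withDensity_tsum fun i => measurable_rnDeriv _ _, sum_fintype]
    exact (Finset.sum_congr rfl fun i _ => withDensity_rnDeriv_of_sum_eq hsum i).trans hsum
  filter_upwards [hsum_rnDeriv] with x hx
  exact (Finset.sum_apply x _ _).symm.trans hx

theorem exists_densities_sum_eq_one_of_sum_eq [Nonempty ι] (hsum : ∑ i, μ i = ν) :
    ∃ ρ : ι → α → ℝ,
      ((∀ i, Measurable (ρ i)) ∧ (∀ i x, ρ i x ∈ Icc (0 : ℝ) 1) ∧ ∀ x, ∑ i, ρ i x = 1) ∧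
      ∀ i, μ i = ν.withDensity fun x => ENNReal.ofReal (ρ i x) := by
  classical
  set d : ι → α → ℝ≥0∞ := fun i => (μ i).rnDeriv ν
  set T : Set α := {x | ∑ i, d i x = 1}
  have hT : MeasurableSet T :=
    (Finset.measurable_sum _ fun i _ => measurable_rnDeriv _ _) (measurableSet_singleton 1)
  have hd_le (i : ι) {x : α} (hx : x ∈ T) : d i x ≤ 1 :=
    hx ▸ Finset.single_le_sum (f := fun j => d j x) (fun j _ => zero_le) (Finset.mem_univ i)
  have hd_ne_top (i : ι) {x : α} (hx : x ∈ T) : d i x ≠ ∞ :=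
    ((hd_le i hx).trans_lt ENNReal.one_lt_top).ne
  -- `Tᶜ` is `ν`-null, so any partition will do there
  let i₀ := Classical.arbitrary ι
  refine ⟨fun i x => if x ∈ T then (d i x).toReal else Pi.single (M := fun _ => ℝ) i₀ 1 i,
    ⟨fun i => ?_, fun i x => ?_, fun x => ?_⟩, fun i => ?_⟩
  · exact Measurable.ite hT (measurable_rnDeriv _ _).ennreal_toReal measurable_const
  · by_cases hx : x ∈ T
    · simp only [hx, if_true]
      exact ⟨ENNReal.toReal_nonneg,
        ENNReal.toReal_le_of_le_ofReal zero_le_one (by simpa using hd_le i hx)⟩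
    · rcases eq_or_ne i i₀ with rfl | hi <;> simp [*]
  · by_cases hx : x ∈ T
    · simp only [hx, if_true]
      rw [← ENNReal.toReal_sum fun i _ => hd_ne_top i hx, hx, ENNReal.toReal_one]
    · simp [hx]
  · rw [← withDensity_rnDeriv_of_sum_eq hsum i]
    refine withDensity_congr_ae ?_
    filter_upwards [ae_sum_rnDeriv_eq_one hsum] with x hx
    rw [if_pos (show x ∈ T from hx), ENNReal.ofReal_toReal (hd_ne_top i hx)]

end MeasureTheory.Measure

namespace StieltjesFunction

variable {R : Type*} [LinearOrder R] [TopologicalSpace R] {ι : Type*}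

theorem sum_apply (s : Finset ι) (f : ι → StieltjesFunction R) (x : R) :
    (∑ i ∈ s, f i) x = ∑ i ∈ s, f i x :=
  map_sum (⟨⟨fun g => g x, rfl⟩, fun _ _ => rfl⟩ : StieltjesFunction R →+ ℝ) f s

theorem measure_sum [OrderTopology R] [CompactIccSpace R] [MeasurableSpace R] [BorelSpace R]
    [SecondCountableTopology R] [DenselyOrdered R] (s : Finset ι)
    (f : ι → StieltjesFunction R) : (∑ i ∈ s, f i).measure = ∑ i ∈ s, (f i).measure := by
  induction s using Finset.cons_induction with
  | empty => simp
  | cons i s hi ih => simp [ih]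

theorem intervalIntegral_eq_sub_of_measure_eq_withDensity (S : StieltjesFunction ℝ)
    {ρ : ℝ → ℝ} (hρ : AEStronglyMeasurable ρ) (hρ₀ : 0 ≤ ρ)
    (hS : S.measure = volume.withDensity fun x => ENNReal.ofReal (ρ x)) (a b : ℝ) :
    ∫ x in a..b, ρ x = S b - S a := by
  wlog hab : a ≤ b generalizing a b
  · rw [intervalIntegral.integral_symm, this b a (le_of_not_ge hab), neg_sub]
  rw [intervalIntegral.integral_of_le hab,
    integral_eq_lintegral_of_nonneg_ae (ae_of_all _ hρ₀) hρ.restrict,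
    ← withDensity_apply _ measurableSet_Ioc, ← hS, S.measure_Ioc,
    ENNReal.toReal_ofReal (sub_nonneg.2 (S.mono hab))]

end StieltjesFunction

theorem tendsto_setIntegral_Icc_of_tendsto_intervalIntegral {E ι : Type*}
    [NormedAddCommGroup E] [NormedSpace ℝ E] {l : Filter ι} {f : ι → ℝ → E} {g : ℝ → E}
    {a b : ℝ} (h : Tendsto (fun n => ∫ x in a..b, f n x) l (𝓝 (∫ x in a..b, g x))) :
    Tendsto (fun n => ∫ x in Icc a b, f n x) l (𝓝 (∫ x in Icc a b, g x)) := by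
  rcases le_or_gt a b with hab | hba
  · simpa only [integral_Icc_eq_integral_Ioc, ← intervalIntegral.integral_of_le hab] using h
  · simp only [Icc_eq_empty_of_lt hba, Measure.restrict_empty, integral_zero_measure]
    exact tendsto_const_nhds

/-- Every sequence of fractional `q`-partitions contains a subsequence converging
over rational intervals to some fractional `q`-partition. -/
theorem stmt13 (q : ℕ) (ρs : ℕ → Fin q → ℝ → ℝ)
    (h : ∀ n, IsFracPartition q (ρs n)) :
    ∃ (φ : ℕ → ℕ) (ρ : Fin q → ℝ → ℝ), StrictMono φ ∧ IsFracPartition q ρ ∧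
      ∀ (i : Fin q) (a b : ℚ), 0 ≤ a → (b : ℚ) ≤ 1 →
        Tendsto (fun n => ∫ x in Set.Icc (a : ℝ) (b : ℝ), ρs (φ n) i x) atTop
          (nhds (∫ x in Set.Icc (a : ℝ) (b : ℝ), ρ i x)) := by
  have : Nonempty (Fin q) := Finset.univ_nonempty_iff.1 <|
    Finset.nonempty_of_sum_ne_zero (f := fun i => ρs 0 i 0) (by simp [(h 0).2.2 0])
  have hmeas n i : AEStronglyMeasurable (ρs n i) := ((h n).1 i).aestronglyMeasurable
  have hnorm n i x : ‖ρs n i x‖ ≤ (1 : ℝ≥0) := by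
    simpa [abs_of_nonneg ((h n).2.1 i x).1] using ((h n).2.1 i x).2
  have hint n i a b := intervalIntegrable_of_norm_le (hmeas n i) (hnorm n i) a b
  obtain ⟨φ, hφ, G, hG⟩ := exists_subseq_tendsto_primitive hmeas hnorm
  have hmono i : Monotone (G i) := monotone_of_frequently_monotone_of_tendsto
    (.of_forall fun n => monotone_primitive (hint _ i) (fun x => ((h _).2.1 i x).1) 0) (hG i)
  have hlip i : LipschitzWith 1 (G i) := (isClosed_setOfPred_lipschitzWith 1).mem_of_tendsto
    (tendsto_pi_nhds.2 (hG i))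
    (.of_forall fun n => lipschitzWith_primitive (hmeas _ i) (hnorm _ i) 0)
  have hsum x : ∑ i, G i x = x := by
    refine tendsto_nhds_unique (tendsto_finsetSum _ fun i _ => hG i x) ?_
    simp [← intervalIntegral.integral_finsetSum fun i _ => hint _ i 0 x, (h _).2.2]
  let S i : StieltjesFunction ℝ := ⟨G i, hmono i, fun x => (hlip i).continuous.continuousWithinAt⟩
  have hS : ∑ i, (S i).measure = volume := by
    rw [← StieltjesFunction.measure_sum, Real.volume_eq_stieltjes_id]
    congr 1
    ext x
    simp [StieltjesFunction.sum_apply, S, hsum]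
  obtain ⟨ρ, hρ, hρS⟩ := Measure.exists_densities_sum_eq_one_of_sum_eq hS
  refine ⟨φ, ρ, hφ, hρ, fun i a b _ _ => tendsto_setIntegral_Icc_of_tendsto_intervalIntegral ?_⟩
  rw [(S i).intervalIntegral_eq_sub_of_measure_eq_withDensity (hρ.1 i).aestronglyMeasurable
    (fun x => (hρ.2.1 i x).1) (hρS i)]
  simpa only [intervalIntegral.integral_interval_sub_left (hint _ i 0 b) (hint _ i 0 a)]
    using (hG i b).sub (hG i a)
end

section
/- If fractional q-partitions ρ^{(n)} converge to ρ over rational intervals, then limsup_{n→∞} Ent(ρ^{(n)}) ≤ Ent(ρ), where Ent(ρ) = ∫₀¹ ∑_i (-ρ_i log ρ_i). -/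
/-!
Cut `[0,1]` into `K` cells of length `1/K` and replace each `ρ i` by its average on each cell.
Since `-x log x` is concave, Jensen's inequality makes this coarse-graining increase the entropy,
so `Ent (ρ⁽ⁿ⁾)` is at most the coarse-grained entropy `E_K (ρ⁽ⁿ⁾)`. The latter only depends on
the integrals of the `ρ⁽ⁿ⁾ i` over the cells, which have rational endpoints; hence
`E_K (ρ⁽ⁿ⁾) → E_K (ρ)` and `limsup Ent (ρ⁽ⁿ⁾) ≤ E_K (ρ)` for every `K`. Finally
`E_K (ρ) → Ent ρ` as `K → ∞`: by the Lebesgue differentiation theorem the cell averages converge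
to `ρ i` almost everywhere, and the integrands are bounded by `q`.
-/

open MeasureTheory Filter

open Set Real Topology

theorem abs_negMulLog_le_one {t : ℝ} (h0 : 0 ≤ t) (h1 : t ≤ 1) : |negMulLog t| ≤ 1 :=
  abs_le.2 ⟨by linarith [negMulLog_nonneg h0 h1], by linarith [negMulLog_le_one_sub_self h0]⟩

theorem abs_sum_negMulLog_le {ι : Type*} [Fintype ι] {p : ι → ℝ} (hp : ∀ i, p i ∈ Icc 0 1) :
    |∑ i, negMulLog (p i)| ≤ Fintype.card ι :=
  (Finset.abs_sum_le_sum_abs _ _).trans <| by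
    simpa using Finset.sum_le_sum fun i (_ : i ∈ Finset.univ) =>
      abs_negMulLog_le_one (hp i).1 (hp i).2

section Integrability

variable {α : Type*} [MeasurableSpace α] {μ : Measure α} {s : Set α}

theorem integrableOn_of_mem_Icc_zero_one {f : α → ℝ} (hf : Measurable f)
    (h01 : ∀ x, f x ∈ Icc 0 1) (hs : μ s ≠ ⊤) : IntegrableOn f s μ :=
  .of_bound hs.lt_top hf.aestronglyMeasurable 1 <| ae_of_all _ fun x =>
    abs_le.2 ⟨by linarith [(h01 x).1], (h01 x).2⟩

theorem integrableOn_negMulLog_comp {f : α → ℝ} (hf : Measurable f)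
    (h01 : ∀ x, f x ∈ Icc 0 1) (hs : μ s ≠ ⊤) : IntegrableOn (fun x => negMulLog (f x)) s μ :=
  .of_bound hs.lt_top (continuous_negMulLog.measurable.comp hf).aestronglyMeasurable 1 <|
    ae_of_all _ fun x => abs_negMulLog_le_one (h01 x).1 (h01 x).2

theorem integrableOn_sum_negMulLog {ι : Type*} [Fintype ι] {p : ι → α → ℝ}
    (hm : ∀ i, Measurable (p i)) (h01 : ∀ i x, p i x ∈ Icc 0 1) (hs : μ s ≠ ⊤) :
    IntegrableOn (fun x => ∑ i, negMulLog (p i x)) s μ :=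
  integrable_finsetSum _ fun i _ => integrableOn_negMulLog_comp (hm i) (h01 i) hs

theorem setIntegral_negMulLog_le {f : α → ℝ} (hs0 : μ s ≠ 0) (hs : μ s ≠ ⊤)
    (hf : IntegrableOn f s μ) (hf01 : ∀ᵐ x ∂μ.restrict s, f x ∈ Icc 0 1) :
    ∫ x in s, negMulLog (f x) ∂μ ≤ μ.real s * negMulLog (⨍ x in s, f x ∂μ) := by
  have hg : IntegrableOn (negMulLog ∘ f) s μ :=
    .of_bound hs.lt_top (continuous_negMulLog.comp_aestronglyMeasurable hf.1) 1
      (hf01.mono fun x hx => abs_negMulLog_le_one hx.1 hx.2)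
  have hjensen := concaveOn_negMulLog.le_map_set_average continuous_negMulLog.continuousOn
    isClosed_Ici hs0 hs (hf01.mono fun x hx => hx.1) hf hg
  have hpos : 0 < μ.real s := ENNReal.toReal_pos hs0 hs
  rwa [setAverage_eq, smul_eq_mul, inv_mul_le_iff₀ hpos] at hjensen

end Integrability

theorem Ent_eq_setIntegral_negMulLog (q : ℕ) (σ : Fin q → ℝ → ℝ) :
    Ent q σ = ∫ x in Icc 0 1, ∑ i, negMulLog (σ i x) := rfl

theorem Ent_nonneg {q : ℕ} {σ : Fin q → ℝ → ℝ} (hσ : IsFracPartition q σ) : 0 ≤ Ent q σ :=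
  setIntegral_nonneg measurableSet_Icc fun x _ =>
    Finset.sum_nonneg fun i _ => negMulLog_nonneg (hσ.2.1 i x).1 (hσ.2.1 i x).2

section Cells

variable {K : ℕ}

theorem cell_left_le_right (j : ℕ) : (j : ℝ) / K ≤ (j + 1) / K := by
  gcongr; linarith

theorem cell_subset_unitInterval {j : ℕ} (hj : j < K) :
    Icc ((j : ℝ) / K) ((j + 1) / K) ⊆ Icc 0 1 := by
  have hK : (0 : ℝ) < K := by exact_mod_cast (Nat.zero_le j).trans_lt hj
  refine Icc_subset_Icc (by positivity) ((div_le_one hK).2 ?_)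
  exact_mod_cast hj

theorem volume_real_cell (hK : 0 < K) (j : ℕ) :
    volume.real (Icc ((j : ℝ) / K) ((j + 1) / K)) = (K : ℝ)⁻¹ := by
  rw [Real.volume_real_Icc_of_le (cell_left_le_right j)]
  field_simp
  ring

theorem volume_cell_ne_zero (hK : 0 < K) (j : ℕ) :
    volume (Icc ((j : ℝ) / K) ((j + 1) / K)) ≠ 0 := by
  rw [Real.volume_Icc, ne_eq, ENNReal.ofReal_eq_zero, not_le, sub_pos]
  have hK' : (0 : ℝ) < K := by exact_mod_cast hK
  gcongr
  linarith

theorem setIntegral_unitInterval_eq_sum_cells (hK : 0 < K) {g : ℝ → ℝ}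
    (hg : IntegrableOn g (Icc 0 1)) :
    ∫ x in Icc 0 1, g x = ∑ j ∈ Finset.range K, ∫ x in Icc ((j : ℝ) / K) ((j + 1) / K), g x := by
  have hIcc {a b : ℝ} (hab : a ≤ b) : ∫ x in Icc a b, g x = ∫ x in a..b, g x := by
    rw [intervalIntegral.integral_of_le hab, integral_Icc_eq_integral_Ioc]
  have hsum := intervalIntegral.sum_integral_adjacent_intervals (f := g) (μ := volume)
    (a := fun j : ℕ => (j : ℝ) / K) (n := K) fun j hj => by
      refine (hg.mono_set ?_).intervalIntegrable
      rw [uIcc_of_le (by exact_mod_cast cell_left_le_right j)]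
      exact_mod_cast cell_subset_unitInterval hj
  have hK' : (K : ℝ) ≠ 0 := by positivity
  push_cast at hsum
  rw [Finset.sum_congr rfl fun j _ => hIcc (cell_left_le_right j), hIcc zero_le_one, hsum]
  simp [hK']

theorem floor_eq_of_mem_cell (hK : 0 < K) {j : ℕ} {x : ℝ}
    (hx : x ∈ Ico ((j : ℝ) / K) ((j + 1) / K)) : ⌊(K : ℝ) * x⌋₊ = j := by
  have hK' : (0 : ℝ) < K := by exact_mod_cast hK
  have hx0 : 0 ≤ x := le_trans (by positivity) hx.1
  rw [Nat.floor_eq_iff (by positivity)]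
  constructor
  · rw [← div_le_iff₀' hK']; exact hx.1
  · rw [← lt_div_iff₀' hK']; exact hx.2

theorem mem_cell_floor (hK : 0 < K) {x : ℝ} (hx : 0 ≤ x) :
    x ∈ Icc ((⌊(K : ℝ) * x⌋₊ : ℝ) / K) ((⌊(K : ℝ) * x⌋₊ + 1) / K) := by
  have hK' : (0 : ℝ) < K := by exact_mod_cast hK
  constructor
  · rw [div_le_iff₀' hK']; exact Nat.floor_le (by positivity)
  · rw [le_div_iff₀' hK']; exact (Nat.lt_floor_add_one _).le

end Cells

noncomputable def cellAverage (K j : ℕ) (f : ℝ → ℝ) : ℝ :=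
  ⨍ t in Icc ((j : ℝ) / K) ((j + 1) / K), f t

/-- The entropy `E_K` of the step functions obtained by averaging each `σ i` over the cells. -/
noncomputable def coarseEnt (q K : ℕ) (σ : Fin q → ℝ → ℝ) : ℝ :=
  ∑ j ∈ Finset.range K, (K : ℝ)⁻¹ * ∑ i, negMulLog (cellAverage K j (σ i))

theorem Ent_le_coarseEnt {q K : ℕ} {σ : Fin q → ℝ → ℝ} (hσ : IsFracPartition q σ)
    (hK : 0 < K) : Ent q σ ≤ coarseEnt q K σ := by
  obtain ⟨hm, h01, -⟩ := hσ
  rw [Ent_eq_setIntegral_negMulLog, setIntegral_unitInterval_eq_sum_cells hK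
    (integrableOn_sum_negMulLog hm h01 measure_Icc_lt_top.ne)]
  refine Finset.sum_le_sum fun j _ => ?_
  rw [integral_finsetSum _ fun i _ => integrableOn_negMulLog_comp (hm i) (h01 i)
    measure_Icc_lt_top.ne, Finset.mul_sum]
  refine Finset.sum_le_sum fun i _ => ?_
  rw [← volume_real_cell hK j]
  exact setIntegral_negMulLog_le (volume_cell_ne_zero hK j) measure_Icc_lt_top.ne
    (integrableOn_of_mem_Icc_zero_one (hm i) (h01 i) measure_Icc_lt_top.ne)
    (ae_of_all _ (h01 i))

theorem cellAverage_mem_Icc {K : ℕ} (hK : 0 < K) (j : ℕ) {f : ℝ → ℝ} (hf : Measurable f)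
    (h01 : ∀ x, f x ∈ Icc 0 1) : cellAverage K j f ∈ Icc 0 1 :=
  (convex_Icc 0 1).set_average_mem isClosed_Icc (volume_cell_ne_zero hK j)
    measure_Icc_lt_top.ne (ae_of_all _ h01)
    (integrableOn_of_mem_Icc_zero_one hf h01 measure_Icc_lt_top.ne)

theorem measurable_cellAverage_floor (K : ℕ) (f : ℝ → ℝ) :
    Measurable fun x : ℝ => cellAverage K ⌊(K : ℝ) * x⌋₊ f :=
  (measurable_from_nat (f := fun j => cellAverage K j f)).comp
    (Nat.measurable_floor.comp (measurable_const_mul _))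

theorem coarseEnt_eq_setIntegral {q K : ℕ} {σ : Fin q → ℝ → ℝ} (hσ : IsFracPartition q σ)
    (hK : 0 < K) :
    coarseEnt q K σ =
      ∫ x in Icc (0 : ℝ) 1, ∑ i, negMulLog (cellAverage K ⌊(K : ℝ) * x⌋₊ (σ i)) := by
  obtain ⟨hm, h01, -⟩ := hσ
  rw [setIntegral_unitInterval_eq_sum_cells hK (integrableOn_sum_negMulLog
    (fun i => measurable_cellAverage_floor K (σ i))
    (fun i x => cellAverage_mem_Icc hK _ (hm i) (h01 i)) measure_Icc_lt_top.ne)]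
  refine Finset.sum_congr rfl fun j _ => ?_
  rw [integral_Icc_eq_integral_Ico, setIntegral_congr_fun measurableSet_Ico
    fun x hx => by rw [floor_eq_of_mem_cell hK hx], ← integral_Icc_eq_integral_Ico,
    setIntegral_const, volume_real_cell hK, smul_eq_mul]

theorem tendsto_coarseEnt {q : ℕ} (K : ℕ) {ρs : ℕ → Fin q → ℝ → ℝ} {ρ : Fin q → ℝ → ℝ}
    (hconv : ∀ (i : Fin q) (a b : ℚ), 0 ≤ a → (b : ℚ) ≤ 1 →
      Tendsto (fun n => ∫ x in Icc (a : ℝ) (b : ℝ), ρs n i x) atTop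
        (𝓝 (∫ x in Icc (a : ℝ) (b : ℝ), ρ i x))) :
    Tendsto (fun n => coarseEnt q K (ρs n)) atTop (𝓝 (coarseEnt q K ρ)) := by
  refine tendsto_finsetSum _ fun j hj => (tendsto_finsetSum _ fun i _ => ?_).const_mul _
  have hb : ((j : ℚ) + 1) / K ≤ 1 :=
    div_le_one_of_le₀ (by exact_mod_cast Finset.mem_range.1 hj) K.cast_nonneg
  have h := hconv i (j / K) ((j + 1) / K) (by positivity) hb
  push_cast at h
  simp only [cellAverage, setAverage_eq, smul_eq_mul]
  exact (continuous_negMulLog.tendsto _).comp (h.const_mul _)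

theorem ae_tendsto_cellAverage_floor {f : ℝ → ℝ} (hf : LocallyIntegrable f) :
    ∀ᵐ x : ℝ, 0 ≤ x →
      Tendsto (fun K : ℕ => cellAverage K ⌊(K : ℝ) * x⌋₊ f) atTop (𝓝 (f x)) := by
  -- The cell of `x` is the closed ball of radius `1 / (2K)` around its midpoint.
  filter_upwards [IsUnifLocDoublingMeasure.ae_tendsto_average (μ := volume) hf 1] with x hx hx0
  have hball {K : ℕ} (hK : 0 < K) :
      Metric.closedBall (((⌊(K : ℝ) * x⌋₊ : ℝ) + 2⁻¹) / K) ((2 * K : ℝ)⁻¹) =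
        Icc ((⌊(K : ℝ) * x⌋₊ : ℝ) / K) ((⌊(K : ℝ) * x⌋₊ + 1) / K) := by
    have hK' : (K : ℝ) ≠ 0 := by positivity
    rw [Real.closedBall_eq_Icc]
    congr 1 <;> field_simp <;> ring
  have hδ : Tendsto (fun K : ℕ => ((2 : ℝ) * K)⁻¹) atTop (𝓝[>] 0) := by
    refine tendsto_nhdsWithin_of_tendsto_nhds_of_eventually_within _
      (tendsto_inv_atTop_zero.comp
        (tendsto_natCast_atTop_atTop.const_mul_atTop two_pos)) ?_
    filter_upwards [eventually_gt_atTop 0] with K (hK : 0 < K)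
    have hK' : (0 : ℝ) < K := by exact_mod_cast hK
    exact mem_Ioi.2 (by positivity)
  refine (hx (fun K : ℕ => ((⌊(K : ℝ) * x⌋₊ : ℝ) + 2⁻¹) / K) _ hδ ?_).congr' ?_
  · filter_upwards [eventually_gt_atTop 0] with K hK
    rw [one_mul, hball hK]
    exact mem_cell_floor hK hx0
  · filter_upwards [eventually_gt_atTop 0] with K hK
    rw [hball hK, cellAverage]

theorem IsFracPartition.locallyIntegrable {q : ℕ} {σ : Fin q → ℝ → ℝ}
    (hσ : IsFracPartition q σ) (i : Fin q) : LocallyIntegrable (σ i) :=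
  (locallyIntegrable_iff).2 fun _ hk =>
    integrableOn_of_mem_Icc_zero_one (hσ.1 i) (hσ.2.1 i) hk.measure_lt_top.ne

theorem tendsto_coarseEnt_Ent {q : ℕ} {ρ : Fin q → ℝ → ℝ} (hρ : IsFracPartition q ρ) :
    Tendsto (fun K => coarseEnt q K ρ) atTop (𝓝 (Ent q ρ)) := by
  have hK : ∀ᶠ K : ℕ in atTop, 0 < K := eventually_gt_atTop 0
  refine Tendsto.congr' (hK.mono fun K hK => (coarseEnt_eq_setIntegral hρ hK).symm) ?_
  refine tendsto_integral_filter_of_dominated_convergence (fun _ => q)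
    (Eventually.of_forall fun K => (Finset.measurable_sum _ fun i _ =>
      continuous_negMulLog.measurable.comp
        (measurable_cellAverage_floor K (ρ i))).aestronglyMeasurable)
    (hK.mono fun K hK => ae_of_all _ fun x => by
      simpa using abs_sum_negMulLog_le fun i => cellAverage_mem_Icc hK _ (hρ.1 i) (hρ.2.1 i))
    (integrable_const _) ?_
  have hlim := ae_all_iff.2 fun i => ae_tendsto_cellAverage_floor (hρ.locallyIntegrable i)
  filter_upwards [ae_restrict_of_ae hlim, ae_restrict_mem measurableSet_Icc] with x hx hx01
  exact tendsto_finsetSum _ fun i _ => (continuous_negMulLog.tendsto _).comp (hx i hx01.1)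

/-- Upper semicontinuity of entropy along convergence over rational intervals. -/
theorem stmt14 (q : ℕ) (ρs : ℕ → Fin q → ℝ → ℝ) (ρ : Fin q → ℝ → ℝ)
    (hs : ∀ n, IsFracPartition q (ρs n)) (hρ : IsFracPartition q ρ)
    (hconv : ∀ (i : Fin q) (a b : ℚ), 0 ≤ a → (b : ℚ) ≤ 1 →
      Tendsto (fun n => ∫ x in Set.Icc (a : ℝ) (b : ℝ), ρs n i x) atTop
        (nhds (∫ x in Set.Icc (a : ℝ) (b : ℝ), ρ i x))) :
    limsup (fun n => Ent q (ρs n)) atTop ≤ Ent q ρ := by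
  have hle (K : ℕ) (hK : 0 < K) : limsup (fun n => Ent q (ρs n)) atTop ≤ coarseEnt q K ρ := by
    have hlim := tendsto_coarseEnt K hconv
    rw [← hlim.limsup_eq]
    exact limsup_le_limsup (Eventually.of_forall fun n => Ent_le_coarseEnt (hs n) hK)
      (isCoboundedUnder_le_of_le atTop fun n => Ent_nonneg (hs n)) hlim.isBoundedUnder_le
  exact ge_of_tendsto (tendsto_coarseEnt_Ent hρ) ((eventually_gt_atTop 0).mono hle)
end

section
/- Rearrangement inequality for nonnegative functions on [0,1]²: if W, U : [0,1]² → [0,∞) are measurable with W ∈ L^p, U ∈ L^{p'} (1/p + 1/p' = 1), then E[W·U] ≤ E[W*·U*], where W*(x₁,x₂) = sup{ t ∈ ℝ : Pr[W > t] > max(x₁,x₂)² } is the (symmetric two-variable) monotone rearrangement and E denotes integration over [0,1]². -/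
open MeasureTheory

/-- `Pr[W > t]`: Lebesgue measure of the super-level set within `[0,1]²`. -/
noncomputable def levelPr (W : ℝ × ℝ → ℝ) (t : ℝ) : ℝ :=
  (volume ((Set.Icc (0:ℝ) 1 ×ˢ Set.Icc (0:ℝ) 1) ∩ {z | t < W z})).toReal

/-- The symmetric two-variable monotone rearrangement
`W*(x₁,x₂) = sup{ t : Pr[W > t] > max(x₁,x₂)² }`. -/
noncomputable def rearr (W : ℝ × ℝ → ℝ) (z : ℝ × ℝ) : ℝ :=
  sSup {t : ℝ | levelPr W t > (max z.1 z.2)^2}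

/-!
By the layer-cake formula, `∫ W U = ∫∫_{s,t>0} |{W > s} ∩ {U > t}| ds dt`, and the integrand is
at most `min (|{W > s}|, |{U > t}|)`. Up to the origin, the super-level sets of `W*` and `U*` are
the squares `[0, √Pr[W > s])²` and `[0, √Pr[U > t])²`: they have the same measures as those of `W`
and `U`, and any two of them are nested, so for `W* U*` the bound is an equality. Equimeasurability
and Hölder's inequality make `∫ W* U*` finite, so the comparison passes to Bochner integrals.
-/

open Set Filter Topology ProbabilityTheory

section LayerCake

variable {α β : Type*} [MeasurableSpace α] [MeasurableSpace β] (μ : Measure α) {f g : α → ℝ}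

theorem lintegral_ofReal_mul_eq_lintegral_lintegral_measure_inter (hf : Measurable f)
    (hg : Measurable g) (hf0 : 0 ≤ f) (hg0 : 0 ≤ g) :
    ∫⁻ x, ENNReal.ofReal (f x * g x) ∂μ =
      ∫⁻ s in Ioi 0, ∫⁻ t in Ioi 0, μ ({x | s < f x} ∩ {x | t < g x}) := by
  calc ∫⁻ x, ENNReal.ofReal (f x * g x) ∂μ
      = ∫⁻ x, ENNReal.ofReal (f x) ∂μ.withDensity fun x => ENNReal.ofReal (g x) := by
        rw [lintegral_withDensity_eq_lintegral_mul _ hg.ennreal_ofReal hf.ennreal_ofReal]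
        exact lintegral_congr fun x => by simp [ENNReal.ofReal_mul (hf0 x), mul_comm]
    _ = ∫⁻ s in Ioi 0, ∫⁻ x in {x | s < f x}, ENNReal.ofReal (g x) ∂μ := by
        rw [lintegral_eq_lintegral_meas_lt _ (ae_of_all _ hf0) hf.aemeasurable]
        exact lintegral_congr fun s => withDensity_apply _ (measurableSet_lt measurable_const hf)
    _ = ∫⁻ s in Ioi 0, ∫⁻ t in Ioi 0, μ ({x | s < f x} ∩ {x | t < g x}) := by
        refine lintegral_congr fun s => ?_
        rw [lintegral_eq_lintegral_meas_lt _ (ae_of_all _ hg0) hg.aemeasurable]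
        exact lintegral_congr fun t => by
          rw [Measure.restrict_apply (measurableSet_lt measurable_const hg), inter_comm]

theorem lintegral_ofReal_mul_le_of_measure_inter_eq_min {ν : Measure β} {f' g' : β → ℝ}
    (hf : Measurable f) (hg : Measurable g) (hf0 : 0 ≤ f) (hg0 : 0 ≤ g)
    (hf' : Measurable f') (hg' : Measurable g') (hf'0 : 0 ≤ f') (hg'0 : 0 ≤ g')
    (h : ∀ s > 0, ∀ t > 0,
      ν ({y | s < f' y} ∩ {y | t < g' y}) = min (μ {x | s < f x}) (μ {x | t < g x})) :
    ∫⁻ x, ENNReal.ofReal (f x * g x) ∂μ ≤ ∫⁻ y, ENNReal.ofReal (f' y * g' y) ∂ν := by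
  rw [lintegral_ofReal_mul_eq_lintegral_lintegral_measure_inter μ hf hg hf0 hg0,
    lintegral_ofReal_mul_eq_lintegral_lintegral_measure_inter ν hf' hg' hf'0 hg'0]
  refine setLIntegral_mono' measurableSet_Ioi fun s hs =>
    setLIntegral_mono' measurableSet_Ioi fun t ht => ?_
  rw [h s hs t ht]
  exact le_min (measure_mono inter_subset_left) (measure_mono inter_subset_right)

theorem lintegral_ofReal_rpow_eq_of_measure_lt_eq {ν : Measure β} {f' : β → ℝ}
    (hf : Measurable f) (hf0 : 0 ≤ f) (hf' : Measurable f') (hf'0 : 0 ≤ f')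
    (h : ∀ t > 0, μ {x | t < f x} = ν {y | t < f' y}) {p : ℝ} (hp : 0 < p) :
    ∫⁻ x, ENNReal.ofReal (f x ^ p) ∂μ = ∫⁻ y, ENNReal.ofReal (f' y ^ p) ∂ν := by
  rw [lintegral_rpow_eq_lintegral_meas_lt_mul μ (ae_of_all _ hf0) hf.aemeasurable hp,
    lintegral_rpow_eq_lintegral_meas_lt_mul ν (ae_of_all _ hf'0) hf'.aemeasurable hp]
  congr 1
  exact setLIntegral_congr_fun measurableSet_Ioi fun t ht => by rw [h t ht]

theorem lintegral_ofReal_mul_ne_top {p q : ℝ} (hpq : p.HolderConjugate q)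
    (hf : Measurable f) (hg : Measurable g) (hf0 : 0 ≤ f) (hg0 : 0 ≤ g)
    (hfp : ∫⁻ x, ENNReal.ofReal (f x ^ p) ∂μ ≠ ⊤) (hgq : ∫⁻ x, ENNReal.ofReal (g x ^ q) ∂μ ≠ ⊤) :
    ∫⁻ x, ENNReal.ofReal (f x * g x) ∂μ ≠ ⊤ := by
  have hHolder := ENNReal.lintegral_mul_le_Lp_mul_Lq μ hpq hf.ennreal_ofReal.aemeasurable
    hg.ennreal_ofReal.aemeasurable
  rw [lintegral_congr fun x => ENNReal.ofReal_rpow_of_nonneg (hf0 x) hpq.nonneg,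
    lintegral_congr fun x => ENNReal.ofReal_rpow_of_nonneg (hg0 x) hpq.symm.nonneg] at hHolder
  refine ne_top_of_le_ne_top ?_
    ((lintegral_congr fun x => ENNReal.ofReal_mul (hf0 x)).trans_le hHolder)
  exact ENNReal.mul_ne_top (ENNReal.rpow_ne_top_of_nonneg hpq.one_div_nonneg hfp)
    (ENNReal.rpow_ne_top_of_nonneg hpq.symm.one_div_nonneg hgq)

theorem integral_le_integral_of_lintegral_ofReal_le (hf0 : 0 ≤ f) (hg0 : 0 ≤ g)
    (hf : AEStronglyMeasurable f μ) (hg : AEStronglyMeasurable g μ)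
    (hfg : ∫⁻ x, ENNReal.ofReal (f x) ∂μ ≤ ∫⁻ x, ENNReal.ofReal (g x) ∂μ)
    (hg_fin : ∫⁻ x, ENNReal.ofReal (g x) ∂μ ≠ ⊤) :
    ∫ x, f x ∂μ ≤ ∫ x, g x ∂μ := by
  rw [integral_eq_lintegral_of_nonneg_ae (ae_of_all _ hf0) hf,
    integral_eq_lintegral_of_nonneg_ae (ae_of_all _ hg0) hg]
  exact ENNReal.toReal_mono hg_fin hfg

end LayerCake

theorem Real.holderConjugate_of_one_le {p q : ℝ} (hp : 1 ≤ p) (hq : 1 ≤ q)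
    (h : 1 / p + 1 / q = 1) : p.HolderConjugate q := by
  have hq' : 0 < 1 / q := by positivity
  refine Real.holderConjugate_iff.2 ⟨(div_lt_one (by positivity)).1 (by linarith), ?_⟩
  simpa only [one_div] using h

abbrev unitSquare : Set (ℝ × ℝ) := Icc 0 1 ×ˢ Icc 0 1

instance : IsProbabilityMeasure (volume.restrict unitSquare) :=
  ⟨by
    rw [Measure.restrict_apply_univ, Measure.volume_eq_prod, Measure.prod_prod, Real.volume_Icc]
    norm_num⟩

section LevelPr

variable {f : ℝ × ℝ → ℝ} {a s t : ℝ}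

theorem levelPr_eq_measureReal (f : ℝ × ℝ → ℝ) (t : ℝ) :
    levelPr f t = (volume.restrict unitSquare).real {z | t < f z} := by
  rw [measureReal_def, Measure.restrict_apply' (measurableSet_Icc.prod measurableSet_Icc),
    inter_comm]
  rfl

theorem ofReal_levelPr (f : ℝ × ℝ → ℝ) (t : ℝ) :
    ENNReal.ofReal (levelPr f t) = volume.restrict unitSquare {z | t < f z} := by
  rw [levelPr_eq_measureReal, ofReal_measureReal]

theorem levelPr_eq_one_sub_cdf (hf : Measurable f) (t : ℝ) :
    levelPr f t = 1 - cdf ((volume.restrict unitSquare).map f) t := by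
  have := Measure.isProbabilityMeasure_map (μ := volume.restrict unitSquare) hf.aemeasurable
  rw [levelPr_eq_measureReal, cdf_eq_real,
    ← probReal_univ (μ := (volume.restrict unitSquare).map f), ← measureReal_compl measurableSet_Iic,
    compl_Iic, map_measureReal_apply hf measurableSet_Ioi]
  rfl

theorem levelPr_antitone (f : ℝ × ℝ → ℝ) : Antitone (levelPr f) := fun s t hst => by
  rw [levelPr_eq_measureReal, levelPr_eq_measureReal]
  exact measureReal_mono fun z hz => hst.trans_lt hz

theorem levelPr_nonneg (f : ℝ × ℝ → ℝ) (t : ℝ) : 0 ≤ levelPr f t := ENNReal.toReal_nonneg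

theorem levelPr_le_one (f : ℝ × ℝ → ℝ) (t : ℝ) : levelPr f t ≤ 1 := by
  rw [levelPr_eq_measureReal]
  exact measureReal_le_one

theorem levelPr_of_neg (hf0 : 0 ≤ f) (ht : t < 0) : levelPr f t = 1 := by
  rw [levelPr_eq_measureReal, show {z | t < f z} = univ from
    eq_univ_of_forall fun z => ht.trans_le (hf0 z), probReal_univ]

theorem continuousWithinAt_levelPr_Ioi (hf : Measurable f) (t : ℝ) :
    ContinuousWithinAt (levelPr f) (Ioi t) t := by
  simp_rw [funext (levelPr_eq_one_sub_cdf hf)]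
  exact (continuousWithinAt_const.sub (StieltjesFunction.right_continuous _ t)).mono
    Ioi_subset_Ici_self

theorem tendsto_levelPr_atTop (hf : Measurable f) : Tendsto (levelPr f) atTop (𝓝 0) := by
  simpa only [funext (levelPr_eq_one_sub_cdf hf), sub_self] using
    (tendsto_cdf_atTop _).const_sub (1 : ℝ)

theorem exists_gt_lt_levelPr (hf : Measurable f) (h : a < levelPr f t) :
    ∃ s > t, a < levelPr f s := by
  obtain ⟨s, hs, hts⟩ := (((continuousWithinAt_levelPr_Ioi hf t).eventually
    (lt_mem_nhds h)).and self_mem_nhdsWithin).exists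
  exact ⟨s, hts, hs⟩

theorem bddAbove_levelPr_gt (hf : Measurable f) (ha : 0 < a) :
    BddAbove {t | levelPr f t > a} := by
  obtain ⟨T, hT⟩ :=
    ((tendsto_levelPr_atTop hf).eventually (gt_mem_nhds ha)).exists_forall_of_atTop
  exact ⟨T, fun t ht => le_of_not_gt fun hTt => (hT t hTt.le).not_gt ht⟩

theorem lt_sSup_levelPr_gt_iff (hf : Measurable f) (ha : 0 < a) (hs : 0 ≤ s) :
    s < sSup {t | levelPr f t > a} ↔ a < levelPr f s := by
  constructor
  · intro h
    obtain hempty | hne := eq_empty_or_nonempty {t | levelPr f t > a}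
    · rw [hempty, Real.sSup_empty] at h
      exact absurd h hs.not_gt
    obtain ⟨t, ht, hst⟩ := (lt_csSup_iff (bddAbove_levelPr_gt hf ha) hne).1 h
    exact ht.trans_le (levelPr_antitone f hst.le)
  · intro h
    obtain ⟨t, hst, ht⟩ := exists_gt_lt_levelPr hf h
    exact hst.trans_le (le_csSup (bddAbove_levelPr_gt hf ha) ht)

theorem rearr_nonneg (hf0 : 0 ≤ f) (z : ℝ × ℝ) : 0 ≤ rearr f z := by
  rcases lt_or_ge (max z.1 z.2 ^ 2) 1 with h | h
  · by_cases hbdd : BddAbove {t | levelPr f t > max z.1 z.2 ^ 2}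
    · calc (0 : ℝ) = sSup (Iio 0) := csSup_Iio.symm
        _ ≤ rearr f z := csSup_le_csSup hbdd nonempty_Iio
            fun t ht => show max z.1 z.2 ^ 2 < levelPr f t by rwa [levelPr_of_neg hf0 ht]
    · rw [rearr, Real.sSup_of_not_bddAbove hbdd]
  · have hempty : {t | levelPr f t > max z.1 z.2 ^ 2} = ∅ :=
      eq_empty_of_forall_notMem fun t ht => (levelPr_le_one f t).not_gt (h.trans_lt ht)
    rw [rearr, hempty, Real.sSup_empty]

end LevelPr

/-- Where `max z.1 z.2 = 0` the supremum defining `rearr` may run over an unbounded set (junk value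
`0`), so its super-level sets are not the squares of the paper there; cutting off the quadrant
`max z.1 z.2 ≤ 0` changes `rearr` on the unit square only at the origin. -/
noncomputable def rearr₀ (f : ℝ × ℝ → ℝ) (z : ℝ × ℝ) : ℝ :=
  if 0 < max z.1 z.2 then rearr f z else 0

section Rearr

variable {f g : ℝ × ℝ → ℝ} {s t : ℝ}

theorem rearr₀_nonneg (hf0 : 0 ≤ f) : 0 ≤ rearr₀ f := fun z => by
  unfold rearr₀
  split_ifs
  exacts [rearr_nonneg hf0 z, le_rfl]

theorem setOf_lt_rearr₀ (hf : Measurable f) (hs : 0 ≤ s) :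
    {z | s < rearr₀ f z} = {z | 0 < max z.1 z.2 ∧ max z.1 z.2 ^ 2 < levelPr f s} := by
  ext z
  change s < rearr₀ f z ↔ 0 < max z.1 z.2 ∧ max z.1 z.2 ^ 2 < levelPr f s
  by_cases hz : 0 < max z.1 z.2
  · rw [rearr₀, if_pos hz, and_iff_right hz]
    exact lt_sSup_levelPr_gt_iff hf (by positivity) hs
  · simp only [rearr₀, hz, false_and, iff_false, not_lt]
    exact hs

theorem measurable_rearr₀ (hf : Measurable f) (hf0 : 0 ≤ f) : Measurable (rearr₀ f) := by
  refine measurable_of_Ioi fun c => ?_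
  change MeasurableSet {z | c < rearr₀ f z}
  rcases lt_or_ge c 0 with hc | hc
  · rw [show {z | c < rearr₀ f z} = univ from
      eq_univ_of_forall fun z => hc.trans_le (rearr₀_nonneg hf0 z)]
    exact .univ
  · have hmax : Measurable fun z : ℝ × ℝ => max z.1 z.2 := measurable_fst.max measurable_snd
    rw [setOf_lt_rearr₀ hf hc]
    exact (measurableSet_lt measurable_const hmax).inter
      (measurableSet_lt (hmax.pow_const 2) measurable_const)

theorem rearr₀_ae_eq (f : ℝ × ℝ → ℝ) : rearr₀ f =ᵐ[volume.restrict unitSquare] rearr f := by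
  filter_upwards [ae_restrict_mem (measurableSet_Icc.prod measurableSet_Icc),
    ae_restrict_of_ae (compl_mem_ae_iff.2 (measure_singleton (0 : ℝ × ℝ)))] with z hzQ hz0
  have hz : 0 < max z.1 z.2 := by
    by_contra! h
    exact hz0 (Prod.ext (le_antisymm ((le_max_left _ _).trans h) hzQ.1.1)
      (le_antisymm ((le_max_right _ _).trans h) hzQ.2.1))
  simp only [rearr₀, if_pos hz]

theorem volume_restrict_unitSquare_corner {a : ℝ} (ha0 : 0 ≤ a) (ha1 : a ≤ 1) :
    volume.restrict unitSquare {z | 0 < max z.1 z.2 ∧ max z.1 z.2 ^ 2 < a} =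
      ENNReal.ofReal a := by
  have hr1 : √a ≤ 1 := Real.sqrt_le_one.2 ha1
  have hsq : ENNReal.ofReal √a * ENNReal.ofReal √a = ENNReal.ofReal a := by
    rw [← ENNReal.ofReal_mul (Real.sqrt_nonneg a), Real.mul_self_sqrt ha0]
  rw [Measure.restrict_apply' (measurableSet_Icc.prod measurableSet_Icc)]
  apply le_antisymm
  · calc _ ≤ volume (Ico 0 √a ×ˢ Ico 0 √a) := measure_mono ?_
      _ = ENNReal.ofReal a := by
        rw [Measure.volume_eq_prod, Measure.prod_prod, Real.volume_Ico, sub_zero, hsq]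
    rintro z ⟨⟨hm0, hma⟩, hz1, hz2⟩
    have hm : max z.1 z.2 < √a := (Real.lt_sqrt hm0.le).2 hma
    exact ⟨⟨hz1.1, (le_max_left _ _).trans_lt hm⟩, ⟨hz2.1, (le_max_right _ _).trans_lt hm⟩⟩
  · calc ENNReal.ofReal a = volume (Ioo 0 √a ×ˢ Ioo 0 √a) := by
          rw [Measure.volume_eq_prod, Measure.prod_prod, Real.volume_Ioo, sub_zero, hsq]
      _ ≤ _ := measure_mono ?_
    rintro z ⟨hz1, hz2⟩
    have hm0 : 0 < max z.1 z.2 := hz1.1.trans_le (le_max_left _ _)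
    exact ⟨⟨hm0, (Real.lt_sqrt hm0.le).1 (max_lt hz1.2 hz2.2)⟩,
      ⟨hz1.1.le, hz1.2.le.trans hr1⟩, ⟨hz2.1.le, hz2.2.le.trans hr1⟩⟩

theorem measure_lt_rearr₀_inter (hf : Measurable f) (hg : Measurable g) (hs : 0 ≤ s)
    (ht : 0 ≤ t) :
    volume.restrict unitSquare ({z | s < rearr₀ f z} ∩ {z | t < rearr₀ g z}) =
      min (volume.restrict unitSquare {z | s < f z})
        (volume.restrict unitSquare {z | t < g z}) := by
  have hcorner : {z | s < rearr₀ f z} ∩ {z | t < rearr₀ g z} =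
      {z | 0 < max z.1 z.2 ∧ max z.1 z.2 ^ 2 < min (levelPr f s) (levelPr g t)} := by
    rw [setOf_lt_rearr₀ hf hs, setOf_lt_rearr₀ hg ht]
    ext z
    simp only [mem_inter_iff, mem_ofPred_eq, lt_min_iff]
    tauto
  rw [hcorner, volume_restrict_unitSquare_corner (le_min (levelPr_nonneg f s)
      (levelPr_nonneg g t)) ((min_le_left _ _).trans (levelPr_le_one f s)),
    ENNReal.ofReal_min, ofReal_levelPr, ofReal_levelPr]

theorem measure_lt_rearr₀ (hf : Measurable f) (hs : 0 ≤ s) :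
    volume.restrict unitSquare {z | s < rearr₀ f z} = volume.restrict unitSquare {z | s < f z} := by
  simpa only [inter_self, min_self] using measure_lt_rearr₀_inter hf hf hs hs

end Rearr

/-- Rearrangement inequality: `E[W·U] ≤ E[W*·U*]` for nonnegative `W ∈ Lᵖ`,
`U ∈ Lᵖ'`, `1/p + 1/p' = 1`. -/
theorem stmt15 (W U : ℝ × ℝ → ℝ) (hWm : Measurable W) (hUm : Measurable U)
    (hWnn : ∀ z, 0 ≤ W z) (hUnn : ∀ z, 0 ≤ U z)
    (p p' : ℝ) (hp : 1 ≤ p) (hp' : 1 ≤ p') (hconj : 1/p + 1/p' = 1)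
    (hWp : IntegrableOn (fun z => W z ^ p) (Set.Icc (0:ℝ) 1 ×ˢ Set.Icc (0:ℝ) 1))
    (hUp : IntegrableOn (fun z => U z ^ p') (Set.Icc (0:ℝ) 1 ×ˢ Set.Icc (0:ℝ) 1)) :
    (∫ z in Set.Icc (0:ℝ) 1 ×ˢ Set.Icc (0:ℝ) 1, W z * U z) ≤
      ∫ z in Set.Icc (0:ℝ) 1 ×ˢ Set.Icc (0:ℝ) 1, rearr W z * rearr U z := by
  have hpq := Real.holderConjugate_of_one_le hp hp' hconj
  have hW₀ := measurable_rearr₀ hWm hWnn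
  have hU₀ := measurable_rearr₀ hUm hUnn
  have hW₀nn := rearr₀_nonneg hWnn
  have hU₀nn := rearr₀_nonneg hUnn
  have hfin : ∫⁻ z in unitSquare, ENNReal.ofReal (rearr₀ W z * rearr₀ U z) ≠ ⊤ := by
    refine lintegral_ofReal_mul_ne_top _ hpq hW₀ hU₀ hW₀nn hU₀nn ?_ ?_
    · rw [lintegral_ofReal_rpow_eq_of_measure_lt_eq _ hW₀ hW₀nn hWm hWnn
        (fun t ht => measure_lt_rearr₀ hWm ht.le) hpq.pos]
      exact hWp.lintegral_lt_top.ne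
    · rw [lintegral_ofReal_rpow_eq_of_measure_lt_eq _ hU₀ hU₀nn hUm hUnn
        (fun t ht => measure_lt_rearr₀ hUm ht.le) hpq.symm.pos]
      exact hUp.lintegral_lt_top.ne
  refine le_of_le_of_eq ?_ (integral_congr_ae ((rearr₀_ae_eq W).mul (rearr₀_ae_eq U)))
  refine integral_le_integral_of_lintegral_ofReal_le _ (fun z => mul_nonneg (hWnn z) (hUnn z))
    (fun z => mul_nonneg (hW₀nn z) (hU₀nn z)) (hWm.mul hUm).aestronglyMeasurable
    (hW₀.mul hU₀).aestronglyMeasurable ?_ hfin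
  exact lintegral_ofReal_mul_le_of_measure_inter_eq_min _ hWm hUm hWnn hUnn hW₀ hU₀ hW₀nn hU₀nn
    fun s hs t ht => measure_lt_rearr₀_inter hWm hUm hs.le ht.le
end

section
/- Let G_n be weighted graphs with |V(G_n)| → ∞, and suppose that for a fixed q, a ∈ Δ_q, and all symmetric J ∈ ℝ^{q×q}, the microcanonical free energies F_{a,ε}(G_n,J) converge (in the sense that lim_{ε→0} liminf_n = lim_{ε→0} limsup_n =: F_a(J)). Then the microcanonical ground state energies converge with E_a(J) = lim_{λ→∞} F_a(λJ)/λ. -/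
/-!
Every `Ω_{a,ε}(G)` has at most `q ^ |V(G)|` elements, so `F ≤ E ≤ F + log q` for each graph, and
`E` is positively homogeneous in `J`. Applied to `λJ` and passed through `liminf`/`limsup` in `k`,
this squeezes `λ` times either limit of `E(G_k, J)` between the corresponding limit of
`F(G_k, λJ)` and that plus `log q`. As `ε → 0` the latter tends to `F_a(λJ)`, so the liminf and
limsup in `ε` of either quantity lie in `[F_a(λJ)/λ, F_a(λJ)/λ + log q / λ]` for every `λ > 0`;
letting `λ → ∞` makes them equal and identifies the common value with `lim F_a(λJ)/λ`.
-/

open Filter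

/-- A weighted graph: vertex set `Fin n` with nonnegative vertex weights of positive
total weight, and symmetric real edge weights. -/
structure WGraph where
  n : ℕ
  w : Fin n → ℝ
  wnn : ∀ u, 0 ≤ w u
  wpos : 0 < ∑ u, w u
  b : Fin n → Fin n → ℝ
  bsymm : ∀ u v, b u v = b v u

/-- Total vertex weight `α_G`. -/
noncomputable def totW (G : WGraph) : ℝ := ∑ u, G.w u

/-- The density `‖G‖₁`. -/
noncomputable def norm1 (G : WGraph) : ℝ :=
  ∑ u, ∑ v, G.w u * G.w v * |G.b u v| / (totW G)^2

/-- Energy of a spin configuration `φ` (with the convention `1/0 = 0` when `‖G‖₁ = 0`). -/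
noncomputable def energy {q : ℕ} (G : WGraph) (J : Matrix (Fin q) (Fin q) ℝ)
    (φ : Fin G.n → Fin q) : ℝ :=
  -(1 / norm1 G) * ∑ u, ∑ v, (G.w u * G.w v / (totW G)^2) * G.b u v * J (φ v) (φ u)

/-- `φ ∈ Ω_{a,ε}(G)`: each color class has weight fraction within `ε` of `a`. -/
def inOmega {q : ℕ} (G : WGraph) (a : Fin q → ℝ) (ε : ℝ) (φ : Fin G.n → Fin q) : Prop :=
  ∀ i, |(∑ u, if φ u = i then G.w u else 0) / totW G - a i| ≤ ε

/-- Microcanonical ground state energy `E_{a,ε}(G,J)`. -/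
noncomputable def microE {q : ℕ} (G : WGraph) (J : Matrix (Fin q) (Fin q) ℝ)
    (a : Fin q → ℝ) (ε : ℝ) : ℝ :=
  sInf {e : ℝ | ∃ φ : Fin G.n → Fin q, inOmega G a ε φ ∧ e = energy G J φ}

/-- Microcanonical partition function `Z_{G,J}^{(a,ε)}`. -/
noncomputable def microZ {q : ℕ} (G : WGraph) (J : Matrix (Fin q) (Fin q) ℝ)
    (a : Fin q → ℝ) (ε : ℝ) : ℝ :=
  ∑ φ : Fin G.n → Fin q,
    Set.indicator {φ : Fin G.n → Fin q | inOmega G a ε φ}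
      (fun φ => Real.exp (-(G.n : ℝ) * energy G J φ)) φ

/-- Microcanonical free energy `F_{a,ε}(G,J)`. -/
noncomputable def microF {q : ℕ} (G : WGraph) (J : Matrix (Fin q) (Fin q) ℝ)
    (a : Fin q → ℝ) (ε : ℝ) : ℝ :=
  -(1 / (G.n : ℝ)) * Real.log (microZ G J a ε)

open Finset Real

noncomputable def entryAbsSum {m n : Type*} [Fintype m] [Fintype n] (J : Matrix m n ℝ) : ℝ :=
  ∑ i, ∑ j, |J i j|

lemma entryAbsSum_nonneg {m n : Type*} [Fintype m] [Fintype n] (J : Matrix m n ℝ) :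
    0 ≤ entryAbsSum J :=
  sum_nonneg fun _ _ => sum_nonneg fun _ _ => abs_nonneg _

lemma abs_le_entryAbsSum {m n : Type*} [Fintype m] [Fintype n] (J : Matrix m n ℝ) (i : m) (j : n) :
    |J i j| ≤ entryAbsSum J :=
  (single_le_sum (f := fun j => |J i j|) (fun _ _ => abs_nonneg _) (mem_univ j)).trans <|
    single_le_sum (f := fun i => ∑ j, |J i j|)
      (fun _ _ => sum_nonneg fun _ _ => abs_nonneg _) (mem_univ i)

namespace WGraph

variable (G : WGraph) {q : ℕ} (J : Matrix (Fin q) (Fin q) ℝ) (a : Fin q → ℝ) (ε : ℝ)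

lemma n_pos : 0 < G.n :=
  Nat.pos_of_ne_zero fun h => G.wpos.ne' (sum_eq_zero fun u _ => absurd u.2 (by omega))

lemma weight_nonneg (u v : Fin G.n) : 0 ≤ G.w u * G.w v / totW G ^ 2 :=
  div_nonneg (mul_nonneg (G.wnn u) (G.wnn v)) (sq_nonneg _)

lemma norm1_nonneg : 0 ≤ norm1 G :=
  sum_nonneg fun u _ => sum_nonneg fun v _ => by
    rw [mul_div_right_comm]
    exact mul_nonneg (G.weight_nonneg u v) (abs_nonneg _)

lemma abs_energy_le (φ : Fin G.n → Fin q) : |energy G J φ| ≤ entryAbsSum J := by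
  have hsum : |∑ u, ∑ v, G.w u * G.w v / totW G ^ 2 * G.b u v * J (φ v) (φ u)|
      ≤ entryAbsSum J * norm1 G :=
    calc _ ≤ ∑ u, ∑ v, |G.w u * G.w v / totW G ^ 2 * G.b u v * J (φ v) (φ u)| :=
          (abs_sum_le_sum_abs _ _).trans (sum_le_sum fun u _ => abs_sum_le_sum_abs _ _)
      _ ≤ ∑ u, ∑ v, G.w u * G.w v * |G.b u v| / totW G ^ 2 * entryAbsSum J := by
          gcongr with u _ v _
          rw [abs_mul, abs_mul, abs_of_nonneg (G.weight_nonneg u v), div_mul_eq_mul_div,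
            mul_div_right_comm (G.w u * G.w v)]
          exact mul_le_mul_of_nonneg_left (abs_le_entryAbsSum J _ _)
            (mul_nonneg (G.weight_nonneg u v) (abs_nonneg _))
      _ = entryAbsSum J * norm1 G := by simp only [norm1, mul_sum, mul_comm]
  rw [energy, neg_mul, abs_neg, abs_mul, one_div, abs_inv, inv_mul_eq_div,
    abs_of_nonneg G.norm1_nonneg]
  exact div_le_of_le_mul₀ G.norm1_nonneg (entryAbsSum_nonneg J) hsum

lemma energy_smul (c : ℝ) (φ : Fin G.n → Fin q) : energy G (c • J) φ = c * energy G J φ := by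
  simp only [energy, Matrix.smul_apply, smul_eq_mul, Finset.mul_sum]
  exact sum_congr rfl fun u _ => sum_congr rfl fun v _ => by ring

lemma bddBelow_energies :
    BddBelow {e : ℝ | ∃ φ : Fin G.n → Fin q, inOmega G a ε φ ∧ e = energy G J φ} :=
  ⟨-entryAbsSum J, by rintro _ ⟨φ, -, rfl⟩; exact neg_le_of_abs_le (G.abs_energy_le J φ)⟩

variable {G J a ε}

lemma microE_le_energy {φ : Fin G.n → Fin q} (hφ : inOmega G a ε φ) :
    microE G J a ε ≤ energy G J φ :=
  csInf_le (G.bddBelow_energies J a ε) ⟨φ, hφ, rfl⟩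

lemma le_microE {φ₀ : Fin G.n → Fin q} (hφ₀ : inOmega G a ε φ₀) {x : ℝ}
    (h : ∀ φ, inOmega G a ε φ → x ≤ energy G J φ) : x ≤ microE G J a ε :=
  le_csInf ⟨_, φ₀, hφ₀, rfl⟩ (by rintro _ ⟨φ, hφ, rfl⟩; exact h φ hφ)

-- With `Ω` empty, the junk values `sInf ∅ = 0` and `log 0 = 0` keep `F ≤ E ≤ F + log q` true.
lemma microE_eq_zero (h : ∀ φ, ¬ inOmega G a ε φ) : microE G J a ε = 0 := by
  simp [microE, h]

lemma microF_eq_zero (h : ∀ φ, ¬ inOmega G a ε φ) : microF G J a ε = 0 := by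
  rw [microF, microZ, sum_eq_zero fun φ _ => Set.indicator_of_notMem (h φ) _, Real.log_zero,
    mul_zero]

variable (G J a ε)

lemma abs_microE_le : |microE G J a ε| ≤ entryAbsSum J := by
  by_cases h : ∃ φ, inOmega G a ε φ
  · obtain ⟨φ₀, hφ₀⟩ := h
    exact abs_le.mpr ⟨le_microE hφ₀ fun φ _ => neg_le_of_abs_le (G.abs_energy_le J φ),
      (microE_le_energy hφ₀).trans (le_of_abs_le (G.abs_energy_le J φ₀))⟩
  · rw [microE_eq_zero (not_exists.mp h), abs_zero]
    exact entryAbsSum_nonneg J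

lemma microE_smul {c : ℝ} (hc : 0 ≤ c) : microE G (c • J) a ε = c * microE G J a ε := by
  rw [microE, microE, ← smul_eq_mul, ← Real.sInf_smul_of_nonneg hc]
  congr 1
  ext e
  simp only [Set.mem_ofPred_eq, Set.mem_smul_set, smul_eq_mul, energy_smul]
  constructor
  · rintro ⟨φ, hφ, rfl⟩
    exact ⟨_, ⟨φ, hφ, rfl⟩, rfl⟩
  · rintro ⟨_, ⟨φ, hφ, rfl⟩, rfl⟩
    exact ⟨φ, hφ, rfl⟩

lemma exp_le_microZ {φ : Fin G.n → Fin q} (hφ : inOmega G a ε φ) :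
    exp (-(G.n : ℝ) * energy G J φ) ≤ microZ G J a ε := by
  have := single_le_sum (fun ψ _ => Set.indicator_nonneg (fun _ _ => (exp_pos _).le) ψ)
    (mem_univ φ) (f := Set.indicator {φ | inOmega G a ε φ}
      fun φ => exp (-(G.n : ℝ) * energy G J φ))
  rwa [Set.indicator_of_mem (s := {φ | inOmega G a ε φ}) hφ] at this

lemma microZ_le : microZ G J a ε ≤ (q : ℝ) ^ G.n * exp (-(G.n : ℝ) * microE G J a ε) := by
  calc microZ G J a ε ≤ ∑ _φ : Fin G.n → Fin q, exp (-(G.n : ℝ) * microE G J a ε) := by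
        refine sum_le_sum fun φ _ => ?_
        by_cases hφ : inOmega G a ε φ
        · rw [Set.indicator_of_mem (s := {φ | inOmega G a ε φ}) hφ, exp_le_exp]
          exact mul_le_mul_of_nonpos_left (microE_le_energy hφ) (by simp)
        · rw [Set.indicator_of_notMem (s := {φ | inOmega G a ε φ}) hφ]
          exact (exp_pos _).le
    _ = (q : ℝ) ^ G.n * exp (-(G.n : ℝ) * microE G J a ε) := by simp

lemma microF_eq_neg_log_div : microF G J a ε = -(log (microZ G J a ε) / G.n) := by
  rw [microF, neg_mul, one_div, inv_mul_eq_div]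

lemma microF_le_microE : microF G J a ε ≤ microE G J a ε := by
  by_cases h : ∃ φ, inOmega G a ε φ
  · obtain ⟨φ₀, hφ₀⟩ := h
    refine le_microE hφ₀ fun φ hφ => ?_
    have hlog := log_le_log (exp_pos _) (G.exp_le_microZ J a ε hφ)
    rw [log_exp] at hlog
    rw [microF_eq_neg_log_div, neg_le, le_div_iff₀ (Nat.cast_pos.mpr G.n_pos)]
    linarith
  · rw [microF_eq_zero (not_exists.mp h), microE_eq_zero (not_exists.mp h)]

lemma microE_le_microF_add_log : microE G J a ε ≤ microF G J a ε + log q := by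
  by_cases h : ∃ φ, inOmega G a ε φ
  · obtain ⟨φ₀, hφ₀⟩ := h
    have hlog := log_le_log ((exp_pos _).trans_le (G.exp_le_microZ J a ε hφ₀))
      (G.microZ_le J a ε)
    rw [log_mul (pow_ne_zero _ (Nat.cast_ne_zero.mpr (φ₀ ⟨0, G.n_pos⟩).pos.ne'))
      (exp_pos _).ne', log_exp, log_pow] at hlog
    have : log (microZ G J a ε) / G.n ≤ log q - microE G J a ε := by
      rw [div_le_iff₀ (Nat.cast_pos.mpr G.n_pos)]
      linarith
    rw [microF_eq_neg_log_div]
    linarith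
  · rw [microF_eq_zero (not_exists.mp h), microE_eq_zero (not_exists.mp h), zero_add]
    exact log_natCast_nonneg q

lemma microE_mem_Icc : microE G J a ε ∈ Set.Icc (microF G J a ε) (microF G J a ε + log q) :=
  ⟨G.microF_le_microE J a ε, G.microE_le_microF_add_log J a ε⟩

lemma abs_microF_le : |microF G J a ε| ≤ entryAbsSum J + log q := by
  have hE := abs_le.mp (G.abs_microE_le J a ε)
  have hEF := G.microE_mem_Icc J a ε
  exact abs_le.mpr ⟨by linarith [hEF.2], by linarith [hEF.1, log_natCast_nonneg q]⟩

end WGraph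

open Topology

section Sandwich

variable {α : Type*} {f : Filter α} {u v : α → ℝ} {c : ℝ}

lemma isBoundedUnder_abs_of_sandwich (hu : f.IsBoundedUnder (· ≤ ·) fun x => |u x|)
    (h : ∀ᶠ x in f, v x ∈ Set.Icc (u x) (u x + c)) :
    f.IsBoundedUnder (· ≤ ·) fun x => |v x| :=
  (isBoundedUnder_le_add hu (isBoundedUnder_const (a := |c|))).mono_le <| h.mono fun x hx => by
    simp only [Pi.add_apply]
    exact abs_le.mpr ⟨by linarith [hx.1, neg_abs_le (u x), abs_nonneg c],
      by linarith [hx.2, le_abs_self (u x), le_abs_self c]⟩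

variable [f.NeBot]

lemma liminf_mem_Icc_of_sandwich (hu : f.IsBoundedUnder (· ≤ ·) fun x => |u x|)
    (h : ∀ᶠ x in f, v x ∈ Set.Icc (u x) (u x + c)) :
    liminf v f ∈ Set.Icc (liminf u f) (liminf u f + c) := by
  obtain ⟨hu_le, hu_ge⟩ := isBoundedUnder_le_abs.mp hu
  obtain ⟨hv_le, hv_ge⟩ := isBoundedUnder_le_abs.mp (isBoundedUnder_abs_of_sandwich hu h)
  refine ⟨liminf_le_liminf (h.mono fun _ hx => hx.1) hu_ge hv_le.isCoboundedUnder_ge, ?_⟩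
  rw [← liminf_add_const f u c hu_le.isCoboundedUnder_ge hu_ge]
  exact liminf_le_liminf (h.mono fun _ hx => hx.2) hv_ge
    (isBoundedUnder_le_add hu_le isBoundedUnder_const).isCoboundedUnder_ge

lemma limsup_mem_Icc_of_sandwich (hu : f.IsBoundedUnder (· ≤ ·) fun x => |u x|)
    (h : ∀ᶠ x in f, v x ∈ Set.Icc (u x) (u x + c)) :
    limsup v f ∈ Set.Icc (limsup u f) (limsup u f + c) := by
  obtain ⟨hu_le, hu_ge⟩ := isBoundedUnder_le_abs.mp hu
  obtain ⟨hv_le, hv_ge⟩ := isBoundedUnder_le_abs.mp (isBoundedUnder_abs_of_sandwich hu h)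
  refine ⟨limsup_le_limsup (h.mono fun _ hx => hx.1) hu_ge.isCoboundedUnder_le hv_le, ?_⟩
  rw [← limsup_add_const f u c hu_le hu_ge.isCoboundedUnder_le]
  exact limsup_le_limsup (h.mono fun _ hx => hx.2) hv_ge.isCoboundedUnder_le
    (isBoundedUnder_le_add hu_le isBoundedUnder_const)

lemma liminf_const_mul_of_nonneg (hc : 0 ≤ c) (hu : f.IsBoundedUnder (· ≤ ·) fun x => |u x|) :
    liminf (fun x => c * u x) f = c * liminf u f := by
  obtain ⟨hu_le, hu_ge⟩ := isBoundedUnder_le_abs.mp hu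
  exact ((monotone_mul_left_of_nonneg hc).map_liminf_of_continuousAt u
    (continuous_const_mul c).continuousAt hu_le.isCoboundedUnder_ge hu_ge).symm

lemma limsup_const_mul_of_nonneg (hc : 0 ≤ c) (hu : f.IsBoundedUnder (· ≤ ·) fun x => |u x|) :
    limsup (fun x => c * u x) f = c * limsup u f := by
  obtain ⟨hu_le, hu_ge⟩ := isBoundedUnder_le_abs.mp hu
  exact ((monotone_mul_left_of_nonneg hc).map_limsup_of_continuousAt u
    (continuous_const_mul c).continuousAt hu_le hu_ge.isCoboundedUnder_le).symm

end Sandwich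

lemma tendsto_liminf_of_forall_mul_mem_Icc {α : Type*} {l : Filter α} [l.NeBot] {X : α → ℝ}
    {Φ : ℝ → ℝ} {ψ : ℝ → α → ℝ} {c : ℝ} (hψ : ∀ t > 0, Tendsto (ψ t) l (𝓝 (Φ t)))
    (h : ∀ t > 0, ∀ᶠ x in l, t * X x ∈ Set.Icc (ψ t x) (ψ t x + c)) :
    Tendsto X l (𝓝 (liminf X l)) ∧ Tendsto (fun t => Φ t / t) atTop (𝓝 (liminf X l)) := by
  have hdiv : ∀ t > 0, ∀ᶠ x in l, X x ∈ Set.Icc (ψ t x / t) (ψ t x / t + c / t) :=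
    fun t ht => (h t ht).mono fun x hx => by
      rw [← add_div, Set.mem_Icc, div_le_iff₀ ht, le_div_iff₀ ht, mul_comm]
      exact hx
  have hψ_div : ∀ t > 0, Tendsto (fun x => ψ t x / t) l (𝓝 (Φ t / t)) :=
    fun t ht => (hψ t ht).div_const t
  have hbdd : ∀ t > 0, l.IsBoundedUnder (· ≤ ·) fun x => |ψ t x / t| :=
    fun t ht => (hψ_div t ht).abs.isBoundedUnder_le
  have hX := isBoundedUnder_le_abs.mp <|
    isBoundedUnder_abs_of_sandwich (hbdd 1 one_pos) (hdiv 1 one_pos)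
  have hlow : ∀ t > 0, Φ t / t ≤ liminf X l := fun t ht =>
    (hψ_div t ht).liminf_eq ▸ (liminf_mem_Icc_of_sandwich (hbdd t ht) (hdiv t ht)).1
  have hup : ∀ t > 0, limsup X l ≤ Φ t / t + c / t := fun t ht =>
    (hψ_div t ht).limsup_eq ▸ (limsup_mem_Icc_of_sandwich (hbdd t ht) (hdiv t ht)).2
  have hc_div : Tendsto (fun t : ℝ => c / t) atTop (𝓝 0) :=
    tendsto_const_nhds.div_atTop tendsto_id
  have heq : limsup X l = liminf X l := by
    refine le_antisymm (ge_of_tendsto (by simpa using tendsto_const_nhds.add hc_div) ?_)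
      (liminf_le_limsup hX.1 hX.2)
    filter_upwards [eventually_gt_atTop 0] with t ht
    linarith [hlow t ht, hup t ht]
  refine ⟨tendsto_of_liminf_eq_limsup rfl heq hX.1 hX.2, ?_⟩
  refine tendsto_of_tendsto_of_tendsto_of_le_of_le' (by simpa using tendsto_const_nhds.sub hc_div)
    tendsto_const_nhds ?_ ?_ <;> filter_upwards [eventually_gt_atTop 0] with t ht
  · linarith [heq ▸ hup t ht]
  · exact hlow t ht

section Sequences

variable {ι : Type*} {f : Filter ι} (G : ι → WGraph) {q : ℕ}
  (J : Matrix (Fin q) (Fin q) ℝ) (a : Fin q → ℝ) (ε : ℝ) {t : ℝ}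

lemma isBoundedUnder_abs_microE : f.IsBoundedUnder (· ≤ ·) fun k => |microE (G k) J a ε| :=
  isBoundedUnder_of_eventually_le (Eventually.of_forall fun k => (G k).abs_microE_le J a ε)

lemma isBoundedUnder_abs_microF : f.IsBoundedUnder (· ≤ ·) fun k => |microF (G k) J a ε| :=
  isBoundedUnder_of_eventually_le (Eventually.of_forall fun k => (G k).abs_microF_le J a ε)

variable [f.NeBot]

lemma mul_liminf_microE_mem_Icc (ht : 0 ≤ t) :
    t * liminf (fun k => microE (G k) J a ε) f ∈
      Set.Icc (liminf (fun k => microF (G k) (t • J) a ε) f)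
        (liminf (fun k => microF (G k) (t • J) a ε) f + log q) := by
  rw [← liminf_const_mul_of_nonneg ht (isBoundedUnder_abs_microE G J a ε)]
  simp only [← WGraph.microE_smul _ _ _ _ ht]
  exact liminf_mem_Icc_of_sandwich (isBoundedUnder_abs_microF G (t • J) a ε)
    (Eventually.of_forall fun k => (G k).microE_mem_Icc (t • J) a ε)

lemma mul_limsup_microE_mem_Icc (ht : 0 ≤ t) :
    t * limsup (fun k => microE (G k) J a ε) f ∈
      Set.Icc (limsup (fun k => microF (G k) (t • J) a ε) f)
        (limsup (fun k => microF (G k) (t • J) a ε) f + log q) := by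
  rw [← limsup_const_mul_of_nonneg ht (isBoundedUnder_abs_microE G J a ε)]
  simp only [← WGraph.microE_smul _ _ _ _ ht]
  exact limsup_mem_Icc_of_sandwich (isBoundedUnder_abs_microF G (t • J) a ε)
    (Eventually.of_forall fun k => (G k).microE_mem_Icc (t • J) a ε)

end Sequences

theorem stmt17_general (G : ℕ → WGraph) (q : ℕ) (a : Fin q → ℝ)
    (FA : Matrix (Fin q) (Fin q) ℝ → ℝ)
    (hF : ∀ J : Matrix (Fin q) (Fin q) ℝ, J.IsSymm →
      Tendsto (fun ε => liminf (fun k => microF (G k) J a ε) atTop)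
        (nhdsWithin 0 (Set.Ioi 0)) (nhds (FA J)) ∧
      Tendsto (fun ε => limsup (fun k => microF (G k) J a ε) atTop)
        (nhdsWithin 0 (Set.Ioi 0)) (nhds (FA J))) :
    ∀ J : Matrix (Fin q) (Fin q) ℝ, J.IsSymm →
      ∃ EA : ℝ,
        Tendsto (fun ε => liminf (fun k => microE (G k) J a ε) atTop)
          (nhdsWithin 0 (Set.Ioi 0)) (nhds EA) ∧
        Tendsto (fun ε => limsup (fun k => microE (G k) J a ε) atTop)
          (nhdsWithin 0 (Set.Ioi 0)) (nhds EA) ∧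
        Tendsto (fun lam : ℝ => FA (lam • J) / lam) atTop (nhds EA) := by
  intro J hJ
  obtain ⟨hliminf, hFA_liminf⟩ := tendsto_liminf_of_forall_mul_mem_Icc
    (fun t _ => (hF (t • J) (hJ.smul t)).1)
    fun t ht => Eventually.of_forall fun ε => mul_liminf_microE_mem_Icc G J a ε ht.le
  obtain ⟨hlimsup, hFA_limsup⟩ := tendsto_liminf_of_forall_mul_mem_Icc
    (fun t _ => (hF (t • J) (hJ.smul t)).2)
    fun t ht => Eventually.of_forall fun ε => mul_limsup_microE_mem_Icc G J a ε ht.le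
  exact ⟨_, hliminf, tendsto_nhds_unique hFA_limsup hFA_liminf ▸ hlimsup, hFA_liminf⟩

/-- If `|V(G_n)| → ∞` and the microcanonical free energies converge (for a fixed `q`, `a`
and all symmetric `J`), then the microcanonical ground state energies converge, with
`E_a(J) = lim_{λ→∞} F_a(λJ)/λ`. -/
theorem stmt17 (G : ℕ → WGraph) (hn : Tendsto (fun k => (G k).n) atTop atTop)
    (q : ℕ) (a : Fin q → ℝ) (hann : ∀ i, 0 ≤ a i) (hasum : ∑ i, a i = 1)
    (FA : Matrix (Fin q) (Fin q) ℝ → ℝ)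
    (hF : ∀ J : Matrix (Fin q) (Fin q) ℝ, J.IsSymm →
      Tendsto (fun ε => liminf (fun k => microF (G k) J a ε) atTop)
        (nhdsWithin 0 (Set.Ioi 0)) (nhds (FA J)) ∧
      Tendsto (fun ε => limsup (fun k => microF (G k) J a ε) atTop)
        (nhdsWithin 0 (Set.Ioi 0)) (nhds (FA J))) :
    ∀ J : Matrix (Fin q) (Fin q) ℝ, J.IsSymm →
      ∃ EA : ℝ,
        Tendsto (fun ε => liminf (fun k => microE (G k) J a ε) atTop)
          (nhdsWithin 0 (Set.Ioi 0)) (nhds EA) ∧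
        Tendsto (fun ε => limsup (fun k => microE (G k) J a ε) atTop)
          (nhdsWithin 0 (Set.Ioi 0)) (nhds EA) ∧
        Tendsto (fun lam : ℝ => FA (lam • J) / lam) atTop (nhds EA) :=
  stmt17_general G q a FA hF
end
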